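/- arXiv:1907.04481 — 9 statements merged into one kernel-verified Lean document; each statement's English description precedes it below -/
import Mathlib

section
/- Let p and q be probability densities on ℝ such that p is light-tailed and q is heavy-tailed, and let T : ℝ → ℝ be an increasing C¹ diffeomorphism with q = T#p. Then the derivative of T is unbounded along the right tail: for every M > 0 and every z₀ > 0 there exists z > z₀ with T'(z) > M. -/
open MeasureTheory Filter Topology Set

/-!
If `T' ≤ M` beyond `z₀`, then `T` grows at most linearly, `T z ≤ T z₀ + M (z - z₀)`, and being
increasing it is bounded above on `(-∞, z₀]`; hence `exp (λ T z) ≤ C exp (λ M z) + D`.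
For `λ = l / M`, with `l` an exponential moment order of `p`, the change of variables `x = T z`
turns the infinite moment `∫ exp (λ x) q x dx` into `∫ exp (λ T z) p z dz ≤ C ∫ exp (l z) p z dz + D`,
which is finite.
-/

open Real ENNReal

lemma lintegral_ofReal_mul_eq_lintegral_withDensity {α : Type*} [MeasurableSpace α]
    (μ : Measure α) {g p : α → ℝ} (hg : ∀ x, 0 ≤ g x) (hp : Measurable p) :
    ∫⁻ x, ENNReal.ofReal (g x * p x) ∂μ
      = ∫⁻ x, ENNReal.ofReal (g x) ∂μ.withDensity fun x => ENNReal.ofReal (p x) := by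
  rw [lintegral_withDensity_eq_lintegral_mul_non_measurable μ hp.ennreal_ofReal
    (ae_of_all _ fun _ => ofReal_lt_top)]
  simp_rw [ENNReal.ofReal_mul (hg _), mul_comm]
  rfl

lemma lintegral_ofReal_mul_of_map_withDensity_eq {α β : Type*} [MeasurableSpace α]
    [MeasurableSpace β] {μ : Measure α} {ν : Measure β} {p : α → ℝ} {q g : β → ℝ} {T : α → β}
    (hp : Measurable p) (hq : Measurable q) (hT : Measurable T) (hg : Measurable g)
    (hg_nonneg : ∀ x, 0 ≤ g x)
    (hpush : (μ.withDensity fun z => ENNReal.ofReal (p z)).map T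
      = ν.withDensity fun x => ENNReal.ofReal (q x)) :
    ∫⁻ x, ENNReal.ofReal (g x * q x) ∂ν = ∫⁻ z, ENNReal.ofReal (g (T z) * p z) ∂μ := by
  rw [lintegral_ofReal_mul_eq_lintegral_withDensity ν hg_nonneg hq, ← hpush,
    lintegral_map hg.ennreal_ofReal hT,
    lintegral_ofReal_mul_eq_lintegral_withDensity μ (fun z => hg_nonneg (T z)) hp]

lemma lintegral_ofReal_mul_lt_top_of_le_mul_add {α : Type*} [MeasurableSpace α]
    {μ : Measure α} {p g w : α → ℝ} (hp : Measurable p)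
    (hp_fin : ∫⁻ x, ENNReal.ofReal (p x) ∂μ < ⊤)
    (hgp_fin : ∫⁻ x, ENNReal.ofReal (g x * p x) ∂μ < ⊤) (hg : ∀ x, 0 ≤ g x)
    (hw : ∀ x, 0 ≤ w x) {C D : ℝ} (hC : 0 ≤ C) (hwle : ∀ x, w x ≤ C * g x + D) :
    ∫⁻ x, ENNReal.ofReal (w x * p x) ∂μ < ⊤ := by
  have hpt : ∀ x, ENNReal.ofReal (w x * p x)
      ≤ ENNReal.ofReal C * ENNReal.ofReal (g x * p x) + ENNReal.ofReal D * ENNReal.ofReal (p x) :=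
    fun x => calc
      ENNReal.ofReal (w x * p x) = ENNReal.ofReal (w x) * ENNReal.ofReal (p x) :=
        ENNReal.ofReal_mul (hw x)
      _ ≤ (ENNReal.ofReal (C * g x) + ENNReal.ofReal D) * ENNReal.ofReal (p x) := by
        gcongr
        exact (ENNReal.ofReal_le_ofReal (hwle x)).trans ENNReal.ofReal_add_le
      _ = _ := by
        rw [ENNReal.ofReal_mul hC, ENNReal.ofReal_mul (hg x), add_mul, mul_assoc]
  calc ∫⁻ x, ENNReal.ofReal (w x * p x) ∂μ
      ≤ ∫⁻ x, ENNReal.ofReal C * ENNReal.ofReal (g x * p x)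
          + ENNReal.ofReal D * ENNReal.ofReal (p x) ∂μ := lintegral_mono hpt
    _ = ENNReal.ofReal C * ∫⁻ x, ENNReal.ofReal (g x * p x) ∂μ
          + ENNReal.ofReal D * ∫⁻ x, ENNReal.ofReal (p x) ∂μ := by
      rw [lintegral_add_right _ (hp.ennreal_ofReal.const_mul _),
        lintegral_const_mul' _ _ ofReal_ne_top, lintegral_const_mul' _ _ ofReal_ne_top]
    _ < ⊤ := add_lt_top.2 ⟨mul_lt_top ofReal_lt_top hgp_fin, mul_lt_top ofReal_lt_top hp_fin⟩

lemma exp_mul_le_of_deriv_le {T : ℝ → ℝ} (hT_mono : Monotone T) (hT : Differentiable ℝ T)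
    {a M c : ℝ} (hc : 0 ≤ c) (hM : ∀ z > a, deriv T z ≤ M) (z : ℝ) :
    exp (c * T z) ≤ exp (c * (T a - M * a)) * exp (c * M * z) + exp (c * T a) := by
  rcases le_or_gt a z with haz | hza
  · have hgrowth : T z - T a ≤ M * (z - a) :=
      (convex_Ici a).image_sub_le_mul_sub_of_deriv_le hT.continuous.continuousOn
        hT.differentiableOn (fun x hx => hM x (by simpa using hx)) a self_mem_Ici z haz haz
    have : exp (c * T z) ≤ exp (c * (T a - M * a)) * exp (c * M * z) := by
      rw [← exp_add]
      gcongr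
      nlinarith
    linarith [exp_pos (c * T a)]
  · have : exp (c * T z) ≤ exp (c * T a) := by
      gcongr
      exact hT_mono hza.le
    nlinarith [exp_pos (c * (T a - M * a)), exp_pos (c * M * z)]

theorem tails_of_increasing_diffeo_unbounded_general
    (p q T : ℝ → ℝ)
    (hp_meas : Measurable p)
    (hp_prob : ∫⁻ z, ENNReal.ofReal (p z) = 1)
    (hq_meas : Measurable q)
    (hp_light : ∃ l > (0:ℝ), ∫⁻ z, ENNReal.ofReal (Real.exp (l * z) * p z) < ⊤)
    (hq_heavy : ∀ l > (0:ℝ), ∫⁻ x, ENNReal.ofReal (Real.exp (l * x) * q x) = ⊤)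
    (hT_mono : StrictMono T) (hT_smooth : ContDiff ℝ 1 T)
    (hpush : Measure.map T (volume.withDensity fun z => ENNReal.ofReal (p z))
      = volume.withDensity fun x => ENNReal.ofReal (q x)) :
    ∀ M > (0:ℝ), ∀ z₀ > (0:ℝ), ∃ z > z₀, deriv T z > M := by
  intro M hM z₀ _
  by_contra! hbd
  obtain ⟨l, hl, hp_moment⟩ := hp_light
  set c := l / M
  have hc : 0 < c := div_pos hl hM
  have hcM : c * M = l := div_mul_cancel₀ l hM.ne'
  have hexp_bound :
      ∀ z, exp (c * T z) ≤ exp (c * (T z₀ - M * z₀)) * exp (l * z) + exp (c * T z₀) := fun z => by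
    simpa only [hcM] using exp_mul_le_of_deriv_le hT_mono.monotone
      (hT_smooth.differentiable one_ne_zero) hc.le hbd z
  have hfin : ∫⁻ z, ENNReal.ofReal (exp (c * T z) * p z) < ⊤ :=
    lintegral_ofReal_mul_lt_top_of_le_mul_add hp_meas (hp_prob ▸ one_lt_top) hp_moment
      (fun _ => (exp_pos _).le) (fun _ => (exp_pos _).le) (exp_pos _).le hexp_bound
  have hinf := hq_heavy c hc
  rw [lintegral_ofReal_mul_of_map_withDensity_eq hp_meas hq_meas
    hT_smooth.continuous.measurable (by fun_prop) (fun _ => (exp_pos _).le) hpush] at hinf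
  exact hfin.ne hinf

/-- If `p` is a light-tailed probability density on ℝ, `q` is a
heavy-tailed probability density on ℝ, and `T` is an increasing C¹ diffeomorphism
pushing `p` forward to `q`, then the derivative of `T` is unbounded along the right
tail: for every `M > 0` and `z₀ > 0` there is `z > z₀` with `T'(z) > M`. -/
theorem tails_of_increasing_diffeo_unbounded
    (p q T : ℝ → ℝ)
    (hp_meas : Measurable p) (hp_nonneg : ∀ z, 0 ≤ p z)
    (hp_prob : ∫⁻ z, ENNReal.ofReal (p z) = 1)
    (hq_meas : Measurable q) (hq_nonneg : ∀ x, 0 ≤ q x)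
    (hq_prob : ∫⁻ x, ENNReal.ofReal (q x) = 1)
    (hp_light : ∃ l > (0:ℝ), ∫⁻ z, ENNReal.ofReal (Real.exp (l * z) * p z) < ⊤)
    (hq_heavy : ∀ l > (0:ℝ), ∫⁻ x, ENNReal.ofReal (Real.exp (l * x) * q x) = ⊤)
    (hT_mono : StrictMono T) (hT_smooth : ContDiff ℝ 1 T)
    (hT_bij : Function.Bijective T) (hT_deriv_pos : ∀ z, 0 < deriv T z)
    (hpush : Measure.map T (volume.withDensity fun z => ENNReal.ofReal (p z))
      = volume.withDensity fun x => ENNReal.ofReal (q x)) :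
    ∀ M > (0:ℝ), ∀ z₀ > (0:ℝ), ∃ z > z₀, deriv T z > M :=
  tails_of_increasing_diffeo_unbounded_general p q T hp_meas hp_prob hq_meas hp_light hq_heavy
    hT_mono hT_smooth hpush
end

section
/- Let p be a probability density on ℝ with ∫_ℝ e^{λ₁ z} p(z) dz < ∞ for some λ₁ > 0. Let T : ℝ → ℝ be increasing and continuous, and suppose there are M > 0 and z₀ > 0 such that T is differentiable on (z₀, ∞) with T'(z) ≤ M for all z > z₀. Then for λ = λ₁/M one has ∫_ℝ e^{λ T(z)} p(z) dz < ∞. -/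
open MeasureTheory Filter Topology Set

/-- If `p` is a probability density on ℝ with
`∫ e^{λ₁ z} p(z) dz < ∞` for some `λ₁ > 0`, and `T : ℝ → ℝ` is increasing and
continuous with `T` differentiable on `(z₀, ∞)` and `T'(z) ≤ M` for all `z > z₀`
(for some `M > 0`, `z₀ > 0`), then `∫ e^{(λ₁/M) T(z)} p(z) dz < ∞`. -/
theorem bounded_slope_preserves_exponential_moment
    (p T : ℝ → ℝ) (l₁ M z₀ : ℝ)
    (hp_meas : Measurable p) (hp_nonneg : ∀ z, 0 ≤ p z)
    (hp_prob : ∫⁻ z, ENNReal.ofReal (p z) = 1)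
    (hl₁ : 0 < l₁)
    (hp_exp : ∫⁻ z, ENNReal.ofReal (Real.exp (l₁ * z) * p z) < ⊤)
    (hT_mono : StrictMono T) (hT_cont : Continuous T)
    (hM : 0 < M) (hz₀ : 0 < z₀)
    (hT_diff : ∀ z ∈ Set.Ioi z₀, DifferentiableAt ℝ T z)
    (hT_deriv : ∀ z ∈ Set.Ioi z₀, deriv T z ≤ M) :
    ∫⁻ z, ENNReal.ofReal (Real.exp ((l₁ / M) * T z) * p z) < ⊤ := by
  set A : ℝ := (l₁ / M) * T z₀ with hA
  -- key pointwise bound: (l₁/M) * T z ≤ A + max 0 (l₁ * (z - z₀))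
  have key : ∀ z : ℝ, (l₁ / M) * T z ≤ A + max 0 (l₁ * (z - z₀)) := by
    intro z
    rcases le_or_gt z z₀ with h | h
    · have : T z ≤ T z₀ := hT_mono.monotone h
      nlinarith [div_pos hl₁ hM, le_max_left (0:ℝ) (l₁ * (z - z₀))]
    · have hMVT : T z - T z₀ ≤ M * (z - z₀) := by
        have hconv : Convex ℝ (Set.Ici z₀) := convex_Ici z₀
        have hint : interior (Set.Ici z₀) = Set.Ioi z₀ := interior_Ici
        refine hconv.image_sub_le_mul_sub_of_deriv_le hT_cont.continuousOn
          (fun x hx => (hT_diff x (hint ▸ hx)).differentiableWithinAt)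
          (fun x hx => hT_deriv x (hint ▸ hx)) z₀ Set.self_mem_Ici z (Set.mem_Ici.2 h.le) h.le
      have h1 : (l₁ / M) * T z ≤ A + (l₁ / M) * (M * (z - z₀)) := by
        have := mul_le_mul_of_nonneg_left (by linarith : T z ≤ T z₀ + M * (z - z₀))
          (le_of_lt (div_pos hl₁ hM))
        linarith [this]
      have h2 : (l₁ / M) * (M * (z - z₀)) = l₁ * (z - z₀) := by
        field_simp
      rw [h2] at h1
      exact h1.trans (by linarith [le_max_right (0:ℝ) (l₁ * (z - z₀))])
  -- hence exp bound
  have expbd : ∀ z : ℝ, Real.exp ((l₁ / M) * T z) * p z ≤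
      Real.exp A * p z + (Real.exp A * Real.exp (-(l₁ * z₀))) * (Real.exp (l₁ * z) * p z) := by
    intro z
    have h1 : Real.exp ((l₁ / M) * T z) ≤ Real.exp A * Real.exp (max 0 (l₁ * (z - z₀))) := by
      rw [← Real.exp_add]
      exact Real.exp_le_exp.2 (key z)
    have h2 : Real.exp (max 0 (l₁ * (z - z₀))) ≤ 1 + Real.exp (-(l₁ * z₀)) * Real.exp (l₁ * z) := by
      rcases max_cases (0:ℝ) (l₁ * (z - z₀)) with ⟨he, _⟩ | ⟨he, _⟩
      · rw [he, Real.exp_zero]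
        have := mul_pos (Real.exp_pos (-(l₁ * z₀))) (Real.exp_pos (l₁ * z))
        linarith
      · rw [he, ← Real.exp_add]
        have : -(l₁ * z₀) + l₁ * z = l₁ * (z - z₀) := by ring
        rw [this]
        linarith [Real.exp_pos (l₁ * (z - z₀))]
    have hp := hp_nonneg z
    calc Real.exp ((l₁ / M) * T z) * p z
        ≤ Real.exp A * Real.exp (max 0 (l₁ * (z - z₀))) * p z :=
          mul_le_mul_of_nonneg_right h1 hp
      _ ≤ Real.exp A * (1 + Real.exp (-(l₁ * z₀)) * Real.exp (l₁ * z)) * p z :=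
          mul_le_mul_of_nonneg_right
            (mul_le_mul_of_nonneg_left h2 (Real.exp_pos A).le) hp
      _ = _ := by ring
  calc ∫⁻ z, ENNReal.ofReal (Real.exp ((l₁ / M) * T z) * p z)
      ≤ ∫⁻ z, (ENNReal.ofReal (Real.exp A) * ENNReal.ofReal (p z) +
          ENNReal.ofReal (Real.exp A * Real.exp (-(l₁ * z₀))) *
            ENNReal.ofReal (Real.exp (l₁ * z) * p z)) := by
        refine lintegral_mono fun z => ?_
        calc ENNReal.ofReal (Real.exp ((l₁ / M) * T z) * p z)
            ≤ ENNReal.ofReal (Real.exp A * p z +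
              (Real.exp A * Real.exp (-(l₁ * z₀))) * (Real.exp (l₁ * z) * p z)) :=
              ENNReal.ofReal_le_ofReal (expbd z)
          _ ≤ _ := by
              rw [ENNReal.ofReal_add (mul_nonneg (Real.exp_pos A).le (hp_nonneg z))
                (mul_nonneg (by positivity) (mul_nonneg (Real.exp_pos _).le (hp_nonneg z))),
                ENNReal.ofReal_mul (by positivity : (0:ℝ) ≤ Real.exp A),
                ENNReal.ofReal_mul (by positivity : (0:ℝ) ≤ Real.exp A * Real.exp (-(l₁ * z₀)))]
    _ = ENNReal.ofReal (Real.exp A) * (∫⁻ z, ENNReal.ofReal (p z)) +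
        ENNReal.ofReal (Real.exp A * Real.exp (-(l₁ * z₀))) *
          (∫⁻ z, ENNReal.ofReal (Real.exp (l₁ * z) * p z)) := by
        rw [lintegral_add_left, lintegral_const_mul, lintegral_const_mul]
        · exact ((Real.measurable_exp.comp (measurable_const.mul measurable_id)).mul hp_meas).ennreal_ofReal
        · exact hp_meas.ennreal_ofReal
        · exact (measurable_const.mul hp_meas.ennreal_ofReal)
    _ < ⊤ := by
        rw [hp_prob]
        exact ENNReal.add_lt_top.2 ⟨by simp [ENNReal.ofReal_lt_top],
          ENNReal.mul_lt_top ENNReal.ofReal_lt_top hp_exp⟩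
end

section
/- Let μ be a probability measure on ℝ with continuous strictly increasing CDF F and quantile function Q = F⁻¹ : (0,1) → ℝ. Suppose Q is differentiable on (u₀, 1) for some u₀ < 1 and that for some α > 0 there is c ∈ (0, ∞) with lim_{u→1⁻} Q'(u)·(1−u)^α = c. Then α < 1 if and only if lim_{u→1⁻} Q(u) is finite (equivalently, if and only if the support of μ is bounded above). -/
open MeasureTheory Filter Topology Set

/-!
Near `1`, `Q'(u)` lies between `(c/2)(1 - u)^(-α)` and `2c(1 - u)^(-α)`. Being nonzero there,
`Q'` is a true derivative and `Q` is increasing, so `Q` has a finite limit at `1⁻` iff it is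
bounded. Comparing derivatives, `Q` grows at most like `-(1 - u)^(1-α) / (1 - α)`, which stays
bounded, when `α < 1`, and at least like `-log (1 - u)`, which tends to `∞`, when `α ≥ 1`.
-/

theorem exists_lt_monotoneOn_Ioo_of_eventually_deriv_nonneg {f : ℝ → ℝ} {b : ℝ}
    (h : ∀ᶠ u in 𝓝[<] b, DifferentiableAt ℝ f u ∧ 0 ≤ deriv f u) :
    ∃ a < b, MonotoneOn f (Ioo a b) := by
  obtain ⟨a, hab, hsub⟩ := mem_nhdsLT_iff_exists_Ioo_subset.mp h
  refine ⟨a, hab, monotoneOn_of_deriv_nonneg (convex_Ioo a b) ?_ ?_ ?_⟩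
  · exact fun u hu => (hsub hu).1.continuousAt.continuousWithinAt
  · rw [interior_Ioo]; exact fun u hu => (hsub hu).1.differentiableWithinAt
  · rw [interior_Ioo]; exact fun u hu => (hsub hu).2

theorem hasDerivAt_neg_one_sub_rpow_div {p u : ℝ} (hp : p ≠ 0) (hu : u < 1) :
    HasDerivAt (fun x => -(1 - x) ^ p / p) ((1 - u) ^ (p - 1)) u := by
  have h : HasDerivAt (fun x => -(1 - x) ^ p / p) (-(-1 * p * (1 - u) ^ (p - 1)) / p) u :=
    (((hasDerivAt_id' u).const_sub 1).rpow_const (Or.inl (sub_pos.2 hu).ne')).neg.div_const p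
  convert h using 1
  field_simp

theorem hasDerivAt_neg_log_one_sub {u : ℝ} (hu : u < 1) :
    HasDerivAt (fun x => -Real.log (1 - x)) (1 - u)⁻¹ u := by
  have h : HasDerivAt (fun x => -Real.log (1 - x)) (-(-1 / (1 - u))) u :=
    (((hasDerivAt_id' u).const_sub 1).log (sub_pos.2 hu).ne').neg
  rwa [neg_div, neg_neg, one_div] at h

theorem tendsto_one_sub_nhdsLT_one : Tendsto (fun u : ℝ => 1 - u) (𝓝[<] 1) (𝓝[>] 0) := by
  have hmaps : MapsTo (fun u : ℝ => 1 - u) (Iio 1) (Ioi 0) := fun _ hu => mem_Ioi.2 (sub_pos.2 hu)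
  simpa using (continuous_sub_left (1 : ℝ)).continuousWithinAt.tendsto_nhdsWithin (x := 1) hmaps

theorem tendsto_neg_log_one_sub_nhdsLT_one :
    Tendsto (fun u : ℝ => -Real.log (1 - u)) (𝓝[<] 1) atTop :=
  tendsto_neg_atBot_atTop.comp (Real.tendsto_log_nhdsGT_zero.comp tendsto_one_sub_nhdsLT_one)

section TailExponent

variable {Q : ℝ → ℝ} {α c : ℝ}

theorem eventually_deriv_mul_rpow_mem_Ioo (hc : 0 < c)
    (hlim : Tendsto (fun u => deriv Q u * (1 - u) ^ α) (𝓝[<] (1:ℝ)) (𝓝 c)) :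
    ∀ᶠ u in 𝓝[<] (1:ℝ), 0 < 1 - u ∧ deriv Q u * (1 - u) ^ α ∈ Ioo (c / 2) (2 * c) :=
  (eventually_mem_nhdsWithin.mono fun _ hu => sub_pos.2 hu).and
    (hlim (Ioo_mem_nhds (by linarith) (by linarith)))

theorem eventually_differentiableAt_and_deriv_pos (hc : 0 < c)
    (hlim : Tendsto (fun u => deriv Q u * (1 - u) ^ α) (𝓝[<] (1:ℝ)) (𝓝 c)) :
    ∀ᶠ u in 𝓝[<] (1:ℝ), DifferentiableAt ℝ Q u ∧ 0 < deriv Q u := by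
  filter_upwards [eventually_deriv_mul_rpow_mem_Ioo hc hlim] with u hu
  obtain ⟨h1u, hlow, -⟩ := hu
  have hpos : 0 < deriv Q u :=
    pos_of_mul_pos_left (by linarith) (Real.rpow_nonneg h1u.le α)
  exact ⟨differentiableAt_of_deriv_ne_zero hpos.ne', hpos⟩

theorem exists_lt_monotoneOn_Ioo_of_tendsto_deriv_mul_rpow (hc : 0 < c)
    (hlim : Tendsto (fun u => deriv Q u * (1 - u) ^ α) (𝓝[<] (1:ℝ)) (𝓝 c)) :
    ∃ a < 1, MonotoneOn Q (Ioo a 1) :=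
  exists_lt_monotoneOn_Ioo_of_eventually_deriv_nonneg <|
    (eventually_differentiableAt_and_deriv_pos hc hlim).mono fun _ h => ⟨h.1, h.2.le⟩

theorem exists_lt_bddAbove_image_Ioo_of_tendsto_deriv_mul_rpow_of_lt_one (hc : 0 < c)
    (hlim : Tendsto (fun u => deriv Q u * (1 - u) ^ α) (𝓝[<] (1:ℝ)) (𝓝 c))
    (hα : α < 1) :
    ∃ a < 1, BddAbove (Q '' Ioo a 1) := by
  set G : ℝ → ℝ := fun u => 2 * c * (-(1 - u) ^ (1 - α) / (1 - α)) - Q u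
  have hG : ∀ᶠ u in 𝓝[<] (1:ℝ), DifferentiableAt ℝ G u ∧ 0 ≤ deriv G u := by
    filter_upwards [eventually_deriv_mul_rpow_mem_Ioo hc hlim,
      eventually_differentiableAt_and_deriv_pos hc hlim] with u hu hQu
    obtain ⟨h1u, -, hup⟩ := hu
    have hGu : HasDerivAt G (2 * c * (1 - u) ^ (1 - α - 1) - deriv Q u) u :=
      ((hasDerivAt_neg_one_sub_rpow_div (by linarith) (sub_pos.1 h1u)).const_mul (2 * c)).sub
        hQu.1.hasDerivAt
    refine ⟨hGu.differentiableAt, ?_⟩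
    rw [hGu.deriv, sub_nonneg, sub_sub_cancel_left, Real.rpow_neg h1u.le, ← div_eq_mul_inv,
      le_div_iff₀ (Real.rpow_pos_of_pos h1u α)]
    exact hup.le
  obtain ⟨a, ha1, hGmono⟩ := exists_lt_monotoneOn_Ioo_of_eventually_deriv_nonneg hG
  obtain ⟨v, hav, hv1⟩ := exists_between ha1
  refine ⟨v, hv1, -G v, ?_⟩
  rintro _ ⟨u, hu, rfl⟩
  have hGvu : G v ≤ G u := hGmono ⟨hav, hv1⟩ ⟨hav.trans hu.1, hu.2⟩ hu.1.le
  have hpow : 0 ≤ (1 - u) ^ (1 - α) / (1 - α) :=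
    div_nonneg (Real.rpow_nonneg (by linarith [hu.2]) _) (by linarith)
  simp only [G, neg_div] at hGvu ⊢
  nlinarith

theorem tendsto_atTop_of_tendsto_deriv_mul_rpow_of_one_le (hc : 0 < c)
    (hlim : Tendsto (fun u => deriv Q u * (1 - u) ^ α) (𝓝[<] (1:ℝ)) (𝓝 c))
    (hα : 1 ≤ α) :
    Tendsto Q (𝓝[<] (1:ℝ)) atTop := by
  set G : ℝ → ℝ := fun u => Q u - c / 2 * -Real.log (1 - u)
  have hG : ∀ᶠ u in 𝓝[<] (1:ℝ), DifferentiableAt ℝ G u ∧ 0 ≤ deriv G u := by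
    filter_upwards [eventually_deriv_mul_rpow_mem_Ioo hc hlim,
      eventually_differentiableAt_and_deriv_pos hc hlim, Ioo_mem_nhdsLT zero_lt_one]
      with u hu hQu hu01
    obtain ⟨h1u, hlow, -⟩ := hu
    have hGu : HasDerivAt G (deriv Q u - c / 2 * (1 - u)⁻¹) u :=
      hQu.1.hasDerivAt.sub ((hasDerivAt_neg_log_one_sub hu01.2).const_mul (c / 2))
    refine ⟨hGu.differentiableAt, ?_⟩
    rw [hGu.deriv, sub_nonneg, ← div_eq_mul_inv, div_le_iff₀ h1u]
    calc c / 2 ≤ deriv Q u * (1 - u) ^ α := hlow.le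
      _ ≤ deriv Q u * (1 - u) := by
        gcongr
        · exact hQu.2.le
        · exact Real.rpow_le_self_of_le_one h1u.le (by linarith [hu01.1]) hα
  obtain ⟨a, ha1, hGmono⟩ := exists_lt_monotoneOn_Ioo_of_eventually_deriv_nonneg hG
  obtain ⟨v, hav, hv1⟩ := exists_between ha1
  have hlower : ∀ᶠ u in 𝓝[<] (1:ℝ), G v + c / 2 * -Real.log (1 - u) ≤ Q u := by
    filter_upwards [Ioo_mem_nhdsLT hv1] with u hu
    have hGvu : G v ≤ G u := hGmono ⟨hav, hv1⟩ ⟨hav.trans hu.1, hu.2⟩ hu.1.le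
    simp only [G] at hGvu ⊢
    linarith
  exact tendsto_atTop_mono' _ hlower <| tendsto_atTop_add_const_left _ _ <|
    tendsto_neg_log_one_sub_nhdsLT_one.const_mul_atTop (half_pos hc)

end TailExponent

theorem tail_exponent_lt_one_iff_bounded_support_general
    (Q : ℝ → ℝ) (α c : ℝ)
    (hc : 0 < c)
    (hlim : Tendsto (fun u => deriv Q u * (1 - u) ^ α) (𝓝[<] (1:ℝ)) (𝓝 c)) :
    α < 1 ↔ ∃ L : ℝ, Tendsto Q (𝓝[<] (1:ℝ)) (𝓝 L) := by
  constructor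
  · intro hα
    obtain ⟨a, ha1, hmono⟩ := exists_lt_monotoneOn_Ioo_of_tendsto_deriv_mul_rpow hc hlim
    obtain ⟨b, hb1, hbdd⟩ :=
      exists_lt_bddAbove_image_Ioo_of_tendsto_deriv_mul_rpow_of_lt_one hc hlim hα
    have hmono' := hmono.mono (Ioo_subset_Ioo_left (le_max_left a b))
    have hbdd' := hbdd.mono (image_mono (Ioo_subset_Ioo_left (le_max_right a b)))
    exact ⟨_, hmono'.tendsto_nhdsWithin_Ioo_left (nonempty_Ioo.2 (max_lt ha1 hb1)) hbdd'⟩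
  · rintro ⟨L, hL⟩
    by_contra! hα
    exact not_tendsto_nhds_of_tendsto_atTop
      (tendsto_atTop_of_tendsto_deriv_mul_rpow_of_one_le hc hlim hα) L hL

/-- Let `μ` be a probability measure on ℝ with continuous strictly
increasing CDF `F` and quantile function `Q = F⁻¹ : (0,1) → ℝ`. If `Q` is
differentiable on `(u₀, 1)` and for some tail exponent `α > 0` one has
`lim_{u→1⁻} Q'(u)·(1−u)^α = c ∈ (0, ∞)`, then `α < 1` iff `lim_{u→1⁻} Q(u)` is
finite (i.e. the support of `μ` is bounded above). -/
theorem tail_exponent_lt_one_iff_bounded_support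
    (μ : Measure ℝ) [IsProbabilityMeasure μ] (Q : ℝ → ℝ) (u₀ α c : ℝ)
    (hF_cont : Continuous fun x => (μ (Set.Iic x)).toReal)
    (hF_mono : StrictMono fun x => (μ (Set.Iic x)).toReal)
    (hQ : ∀ u ∈ Set.Ioo (0:ℝ) 1, (μ (Set.Iic (Q u))).toReal = u)
    (hu₀ : u₀ < 1)
    (hQ_diff : ∀ u ∈ Set.Ioo u₀ 1, DifferentiableAt ℝ Q u)
    (hα : 0 < α) (hc : 0 < c)
    (hlim : Tendsto (fun u => deriv Q u * (1 - u) ^ α) (𝓝[<] (1:ℝ)) (𝓝 c)) :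
    α < 1 ↔ ∃ L : ℝ, Tendsto Q (𝓝[<] (1:ℝ)) (𝓝 L) :=
  tail_exponent_lt_one_iff_bounded_support_general Q α c hc hlim
end

section
/- Let p and q be continuous, everywhere-positive probability densities on ℝ with CDFs F_p, F_q, density quantile functions fQ_p(u) = p(F_p⁻¹(u)) and fQ_q(u) = q(F_q⁻¹(u)), and let T = F_q⁻¹ ∘ F_p. Suppose there exist exponents α_p, α_q > 0 and constants c_p, c_q ∈ (0, ∞) with lim_{u→1⁻} fQ_p(u)/(1−u)^{α_p} = c_p and lim_{u→1⁻} fQ_q(u)/(1−u)^{α_q} = c_q. Then lim_{z→∞} T'(z)·(1−F_p(z))^{α_q−α_p} = c_p/c_q. In particular, T'(z) → ∞ as z → ∞ if α_q > α_p, T'(z) → 0 if α_q < α_p, and T'(z) → c_p/c_q if α_p = α_q. -/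
open MeasureTheory Filter Topology Set

section Aux

variable {p : ℝ → ℝ}

lemma aux_integrable (hc : Continuous p) (hpos : ∀ z, 0 < p z)
    (hprob : ∫⁻ z, ENNReal.ofReal (p z) = 1) : Integrable p := by
  refine ⟨hc.aestronglyMeasurable, ?_⟩
  rw [hasFiniteIntegral_iff_norm]
  have : ∀ z, ENNReal.ofReal ‖p z‖ = ENNReal.ofReal (p z) := fun z => by
    rw [Real.norm_of_nonneg (hpos z).le]
  simp_rw [this, hprob]
  exact ENNReal.one_lt_top

lemma aux_total (hc : Continuous p) (hpos : ∀ z, 0 < p z)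
    (hprob : ∫⁻ z, ENNReal.ofReal (p z) = 1) : ∫ z, p z = 1 := by
  rw [integral_eq_lintegral_of_nonneg_ae (Eventually.of_forall fun z => (hpos z).le)
    hc.aestronglyMeasurable, hprob, ENNReal.toReal_one]

lemma aux_hasDerivAt_cdf (hc : Continuous p) (hint : Integrable p) (z : ℝ) :
    HasDerivAt (fun y => ∫ t in Iic y, p t) (p z) z := by
  have h2 : HasDerivAt (fun y => (∫ t in Iic (0:ℝ), p t) + ∫ t in (0:ℝ)..y, p t) (p z) z :=
    (intervalIntegral.integral_hasDerivAt_right (hint.intervalIntegrable)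
      (hc.aestronglyMeasurable.stronglyMeasurableAtFilter) hc.continuousAt).const_add _
  have heq : (fun y => (∫ t in Iic (0:ℝ), p t) + ∫ t in (0:ℝ)..y, p t)
      = fun y => ∫ t in Iic y, p t := by
    funext y
    rw [← intervalIntegral.integral_Iic_sub_Iic hint.integrableOn hint.integrableOn]
    ring
  rwa [heq] at h2

lemma aux_strictMono (hpos : ∀ z, 0 < p z) (hint : Integrable p) :
    StrictMono (fun z => ∫ t in Iic z, p t) := by
  intro a b hab
  have h1 : 0 < ∫ t in a..b, p t :=
    intervalIntegral.intervalIntegral_pos_of_pos (hint.intervalIntegrable) hpos hab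
  have h2 := intervalIntegral.integral_Iic_sub_Iic (hint.integrableOn (s := Iic a))
    (hint.integrableOn (s := Iic b))
  simp only at h2 ⊢
  linarith

lemma aux_cdf_pos (hpos : ∀ z, 0 < p z) (hint : Integrable p) (z : ℝ) :
    0 < ∫ t in Iic z, p t := by
  have h0 : (0:ℝ) ≤ ∫ t in Iic (z-1), p t :=
    setIntegral_nonneg measurableSet_Iic fun t _ => (hpos t).le
  have h1 := aux_strictMono hpos hint (sub_one_lt z)
  simp only at h1
  linarith

lemma aux_cdf_lt_one (hc : Continuous p) (hpos : ∀ z, 0 < p z) (hint : Integrable p)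
    (hprob : ∫⁻ z, ENNReal.ofReal (p z) = 1) (z : ℝ) :
    (∫ t in Iic z, p t) < 1 := by
  have hIoc : 0 < ∫ t in Ioc z (z+1), p t := by
    have := intervalIntegral.intervalIntegral_pos_of_pos (f := p) (hint.intervalIntegrable) hpos
      (lt_add_one z)
    rwa [intervalIntegral.integral_of_le (le_of_lt (lt_add_one z))] at this
  have hmono : (∫ t in Ioc z (z+1), p t) ≤ ∫ t in Ioi z, p t :=
    setIntegral_mono_set hint.integrableOn
      (Eventually.of_forall fun t => (hpos t).le) (Ioc_subset_Ioi_self.eventuallyLE)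
  have hsplit := intervalIntegral.integral_Iic_add_Ioi (b := z) (f := p) (μ := volume)
    hint.integrableOn hint.integrableOn
  have htot := aux_total hc hpos hprob
  linarith

lemma aux_cdf_tendsto (hint : Integrable p) :
    Tendsto (fun z => ∫ t in Iic z, p t) atTop (𝓝 (∫ t, p t)) := by
  have := tendsto_setIntegral_of_monotone (μ := volume) (f := p)
    (s := fun z : ℝ => Iic z) (fun z => measurableSet_Iic)
    (fun a b hab => Iic_subset_Iic.2 hab)
    (by rw [iUnion_Iic]; exact hint.integrableOn)
  rwa [iUnion_Iic, setIntegral_univ] at this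

lemma aux_quantile_hasDerivAt {Q : ℝ → ℝ} (hc : Continuous p) (hpos : ∀ z, 0 < p z)
    (hint : Integrable p)
    (hQ : ∀ u ∈ Ioo (0:ℝ) 1, (∫ t in Iic (Q u), p t) = u)
    (hmem : ∀ z, (∫ t in Iic z, p t) ∈ Ioo (0:ℝ) 1)
    {u : ℝ} (hu : u ∈ Ioo (0:ℝ) 1) :
    HasDerivAt Q (p (Q u))⁻¹ u := by
  have hmono := aux_strictMono hpos hint
  have hQmono : StrictMonoOn Q (Ioo 0 1) := by
    intro a ha b hb hab
    by_contra h
    push_neg at h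
    have h2 := hmono.monotone h
    rw [hQ a ha, hQ b hb] at h2
    exact absurd h2 (not_le.2 hab)
  have himg : Q '' Ioo 0 1 ∈ 𝓝 (Q u) := by
    have huniv : Q '' Ioo 0 1 = univ := by
      apply eq_univ_of_forall; intro x
      exact ⟨∫ t in Iic x, p t, hmem x,
        hmono.injective (by simpa using hQ _ (hmem x))⟩
    rw [huniv]; exact univ_mem
  have hQcont : ContinuousAt Q u :=
    hQmono.continuousAt_of_image_mem_nhds (Ioo_mem_nhds hu.1 hu.2) himg
  exact (aux_hasDerivAt_cdf hc hint (Q u)).of_local_left_inverse hQcont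
    (ne_of_gt (hpos _)) (Filter.eventually_of_mem (Ioo_mem_nhds hu.1 hu.2) fun y hy => hQ y hy)

end Aux

/-- Let `p`, `q` be continuous everywhere-positive probability
densities on ℝ with CDFs `F_p`, `F_q`, density quantile functions
`fQ_p(u) = p(F_p⁻¹ u)`, `fQ_q(u) = q(F_q⁻¹ u)`, and let `T = F_q⁻¹ ∘ F_p`.
If `fQ_p(u)/(1−u)^{α_p} → c_p` and `fQ_q(u)/(1−u)^{α_q} → c_q` as `u → 1⁻` with
`α_p, α_q > 0` and `c_p, c_q ∈ (0,∞)`, then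
`T'(z)·(1 − F_p(z))^{α_q − α_p} → c_p/c_q` as `z → ∞`. -/
theorem slope_asymptotics_tail_exponents
    (p q T Qp Qq : ℝ → ℝ) (αp αq cp cq : ℝ)
    (hp_cont : Continuous p) (hp_pos : ∀ z, 0 < p z)
    (hp_prob : ∫⁻ z, ENNReal.ofReal (p z) = 1)
    (hq_cont : Continuous q) (hq_pos : ∀ x, 0 < q x)
    (hq_prob : ∫⁻ x, ENNReal.ofReal (q x) = 1)
    (hQp : ∀ u ∈ Set.Ioo (0:ℝ) 1, (∫ t in Set.Iic (Qp u), p t) = u)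
    (hQq : ∀ u ∈ Set.Ioo (0:ℝ) 1, (∫ t in Set.Iic (Qq u), q t) = u)
    (hT : ∀ z, (∫ t in Set.Iic (T z), q t) = ∫ t in Set.Iic z, p t)
    (hαp : 0 < αp) (hαq : 0 < αq) (hcp : 0 < cp) (hcq : 0 < cq)
    (hp_lim : Tendsto (fun u => p (Qp u) / (1 - u) ^ αp) (𝓝[<] (1:ℝ)) (𝓝 cp))
    (hq_lim : Tendsto (fun u => q (Qq u) / (1 - u) ^ αq) (𝓝[<] (1:ℝ)) (𝓝 cq)) :
    Tendsto (fun z => deriv T z * (1 - ∫ t in Set.Iic z, p t) ^ (αq - αp))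
      atTop (𝓝 (cp / cq)) := by
  have hpint : Integrable p := aux_integrable hp_cont hp_pos hp_prob
  have hqint : Integrable q := aux_integrable hq_cont hq_pos hq_prob
  have hpmem : ∀ z, (∫ t in Iic z, p t) ∈ Ioo (0:ℝ) 1 := fun z =>
    ⟨aux_cdf_pos hp_pos hpint z, aux_cdf_lt_one hp_cont hp_pos hpint hp_prob z⟩
  have hqmem : ∀ z, (∫ t in Iic z, q t) ∈ Ioo (0:ℝ) 1 := fun z =>
    ⟨aux_cdf_pos hq_pos hqint z, aux_cdf_lt_one hq_cont hq_pos hqint hq_prob z⟩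
  have hpmono := aux_strictMono hp_pos hpint
  have hqmono := aux_strictMono hq_pos hqint
  -- T z = Qq (Fp z)
  have hTz : ∀ z, T z = Qq (∫ t in Iic z, p t) := by
    intro z
    apply hqmono.injective
    simp only
    rw [hT z, hQq _ (hpmem z)]
  have hQpz : ∀ z, Qp (∫ t in Iic z, p t) = z := by
    intro z
    apply hpmono.injective
    simpa using hQp _ (hpmem z)
  -- derivative of T
  have hderiv_eq : ∀ z, deriv T z = (q (Qq (∫ t in Iic z, p t)))⁻¹ * p z := by
    intro z
    have h1 : HasDerivAt Qq (q (Qq (∫ t in Iic z, p t)))⁻¹ (∫ t in Iic z, p t) :=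
      aux_quantile_hasDerivAt hq_cont hq_pos hqint hQq hqmem (hpmem z)
    have h2 := aux_hasDerivAt_cdf hp_cont hpint z
    have h3 := h1.comp z h2
    have heq : (fun y => Qq (∫ t in Iic y, p t)) = T := funext fun y => (hTz y).symm
    rw [show ((fun u => Qq u) ∘ fun y => ∫ t in Iic y, p t) = T from heq] at h3
    exact h3.deriv
  -- tendsto of Fp to 1 from the left
  have hFtend : Tendsto (fun z => ∫ t in Iic z, p t) atTop (𝓝[<] (1:ℝ)) := by
    apply tendsto_nhdsWithin_of_tendsto_nhds_of_eventually_within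
    · have := aux_cdf_tendsto hpint
      rwa [aux_total hp_cont hp_pos hp_prob] at this
    · exact Eventually.of_forall fun z => (hpmem z).2
  have hlim : Tendsto
      (fun u => (p (Qp u) / (1-u)^αp) / (q (Qq u) / (1-u)^αq)) (𝓝[<] (1:ℝ))
      (𝓝 (cp/cq)) := hp_lim.div hq_lim hcq.ne'
  refine (hlim.comp hFtend).congr fun z => ?_
  simp only [Function.comp]
  set u := ∫ t in Iic z, p t with hu
  have h1u : 0 < 1 - u := by have := (hpmem z).2; linarith
  have hpz : p z = p (Qp u) := by rw [hQpz z]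
  rw [hderiv_eq z, ← hu, hpz, Real.rpow_sub h1u]
  have hA : (1-u)^αp ≠ 0 := (Real.rpow_pos_of_pos h1u αp).ne'
  have hB : (1-u)^αq ≠ 0 := (Real.rpow_pos_of_pos h1u αq).ne'
  have hq0 : q (Qq u) ≠ 0 := (hq_pos _).ne'
  rw [div_div_div_comm]
  simp only [div_eq_mul_inv, mul_inv, inv_inv]
  ring
end

section
/- Let p and q be continuous, everywhere-positive probability densities on ℝ with CDFs F_p, F_q, density quantile functions fQ_p(u) = p(F_p⁻¹(u)) and fQ_q(u) = q(F_q⁻¹(u)), and let T = F_q⁻¹ ∘ F_p. Suppose there exist shape parameters β_p, β_q ∈ [0,1] and constants c_p, c_q ∈ (0, ∞) with lim_{u→1⁻} fQ_p(u) / [(1−u)·(log(1/(1−u)))^{1−β_p}] = c_p and lim_{u→1⁻} fQ_q(u) / [(1−u)·(log(1/(1−u)))^{1−β_q}] = c_q. Then lim_{z→∞} T'(z)·(log(1/(1−F_p(z))))^{β_p−β_q} = c_p/c_q. -/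
/-!
Write `F_p, F_q` for the two CDFs. Since `p, q > 0` they are strictly increasing bijections
`ℝ → (0,1)` with derivatives `p, q`, so the quantile `Q_q` is differentiable with
`Q_q' = 1 / fQ_q` and `T = Q_q ∘ F_p` has `T'(z) = fQ_p(u) / fQ_q(u)` at `u = F_p(z)`.
Dividing the two asymptotic hypotheses, the common factor `1 - u` cancels and the log-powers
combine to `(log (1/(1-u)))^(β_p - β_q)`; as `z → ∞`, `u = F_p(z) → 1⁻`.
-/

open MeasureTheory Filter Topology Set

noncomputable def densityCDF (p : ℝ → ℝ) (z : ℝ) : ℝ := ∫ t in Iic z, p t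

section Density

variable {p : ℝ → ℝ}

lemma integrable_of_lintegral_ofReal_eq_one (hc : Continuous p) (hnn : ∀ z, 0 ≤ p z)
    (hprob : ∫⁻ z, ENNReal.ofReal (p z) = 1) : Integrable p := by
  refine ⟨hc.aestronglyMeasurable, ?_⟩
  rw [HasFiniteIntegral, lintegral_congr fun z => Real.enorm_eq_ofReal (hnn z), hprob]
  exact ENNReal.one_lt_top

lemma integral_eq_one_of_lintegral_ofReal_eq_one (hc : Continuous p) (hnn : ∀ z, 0 ≤ p z)
    (hprob : ∫⁻ z, ENNReal.ofReal (p z) = 1) : ∫ z, p z = 1 := by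
  rw [integral_eq_lintegral_of_nonneg_ae (Eventually.of_forall hnn) hc.aestronglyMeasurable,
    hprob, ENNReal.toReal_one]

lemma densityCDF_sub_densityCDF (hint : Integrable p) (a b : ℝ) :
    densityCDF p b - densityCDF p a = ∫ t in a..b, p t :=
  intervalIntegral.integral_Iic_sub_Iic hint.integrableOn hint.integrableOn

lemma densityCDF_strictMono (hint : Integrable p) (hpos : ∀ z, 0 < p z) :
    StrictMono (densityCDF p) := fun a b hab => by
  have := intervalIntegral.intervalIntegral_pos_of_pos_on
    (hint.intervalIntegrable (a := a) (b := b)) (fun x _ => hpos x) hab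
  linarith [densityCDF_sub_densityCDF hint a b]

lemma hasDerivAt_densityCDF (hint : Integrable p) (hc : Continuous p) (z : ℝ) :
    HasDerivAt (densityCDF p) (p z) z := by
  have h : densityCDF p = fun y => densityCDF p 0 + ∫ t in (0 : ℝ)..y, p t := by
    funext y
    rw [← densityCDF_sub_densityCDF hint]
    ring
  rw [h]
  exact ((hc.integral_hasStrictDerivAt 0 z).hasDerivAt).const_add _

lemma tendsto_densityCDF_atTop (hint : Integrable p) :
    Tendsto (densityCDF p) atTop (𝓝 (∫ z, p z)) := by
  have h := tendsto_setIntegral_of_monotone (μ := volume) (f := p)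
    (fun z => measurableSet_Iic) (fun _ _ => Iic_subset_Iic.mpr)
    (by rw [iUnion_Iic]; exact hint.integrableOn)
  rwa [iUnion_Iic, setIntegral_univ] at h

lemma densityCDF_mem_Ioo (hint : Integrable p) (hpos : ∀ z, 0 < p z) (htot : ∫ z, p z = 1)
    (z : ℝ) : densityCDF p z ∈ Ioo 0 1 := by
  have hmono := densityCDF_strictMono hint hpos
  have hnonneg : 0 ≤ densityCDF p (z - 1) :=
    setIntegral_nonneg measurableSet_Iic fun t _ => (hpos t).le
  have hle : densityCDF p (z + 1) ≤ 1 :=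
    htot ▸ hmono.monotone.ge_of_tendsto (tendsto_densityCDF_atTop hint) _
  exact ⟨hnonneg.trans_lt (hmono (by linarith)), (hmono (by linarith)).trans_le hle⟩

end Density

section Quantile

variable {F Q : ℝ → ℝ} (hF : StrictMono F) (hFmem : ∀ x, F x ∈ Ioo 0 1)
  (hQ : ∀ u ∈ Ioo (0 : ℝ) 1, F (Q u) = u)

include hF hFmem hQ

lemma quantile_apply_eq_self (x : ℝ) : Q (F x) = x :=
  hF.injective (hQ _ (hFmem x))

lemma continuousAt_quantile {u : ℝ} (hu : u ∈ Ioo (0 : ℝ) 1) : ContinuousAt Q u := by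
  have hmono : StrictMonoOn Q (Ioo 0 1) := fun a ha b hb hab => by
    rwa [← hF.lt_iff_lt, hQ a ha, hQ b hb]
  refine hmono.continuousAt_of_image_mem_nhds (Ioo_mem_nhds hu.1 hu.2) (univ_mem' fun x => ?_)
  exact ⟨F x, hFmem x, quantile_apply_eq_self hF hFmem hQ x⟩

lemma hasDerivAt_quantile {u f' : ℝ} (hu : u ∈ Ioo (0 : ℝ) 1) (hderiv : HasDerivAt F f' (Q u))
    (hf' : f' ≠ 0) : HasDerivAt Q f'⁻¹ u :=
  hderiv.of_local_left_inverse (continuousAt_quantile hF hFmem hQ hu) hf' <|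
    eventually_of_mem (Ioo_mem_nhds hu.1 hu.2) hQ

end Quantile

lemma eq_quantile_comp_densityCDF {p q T Q : ℝ → ℝ} (hp_int : Integrable p)
    (hp_pos : ∀ z, 0 < p z) (hp_tot : ∫ z, p z = 1) (hq_int : Integrable q)
    (hq_pos : ∀ x, 0 < q x) (hQ : ∀ u ∈ Ioo (0 : ℝ) 1, densityCDF q (Q u) = u)
    (hT : ∀ z, densityCDF q (T z) = densityCDF p z) : T = Q ∘ densityCDF p :=
  funext fun z => (densityCDF_strictMono hq_int hq_pos).injective <|
    (hT z).trans (hQ _ (densityCDF_mem_Ioo hp_int hp_pos hp_tot z)).symm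

lemma hasDerivAt_quantile_comp_densityCDF {p q Q : ℝ → ℝ} (hp_int : Integrable p)
    (hp_cont : Continuous p) (hp_pos : ∀ z, 0 < p z) (hp_tot : ∫ z, p z = 1)
    (hq_int : Integrable q) (hq_cont : Continuous q) (hq_pos : ∀ x, 0 < q x)
    (hq_tot : ∫ x, q x = 1) (hQ : ∀ u ∈ Ioo (0 : ℝ) 1, densityCDF q (Q u) = u) (z : ℝ) :
    HasDerivAt (Q ∘ densityCDF p) (p z / q (Q (densityCDF p z))) z := by
  have hQ' := hasDerivAt_quantile (densityCDF_strictMono hq_int hq_pos)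
    (densityCDF_mem_Ioo hq_int hq_pos hq_tot) hQ (densityCDF_mem_Ioo hp_int hp_pos hp_tot z)
    (hasDerivAt_densityCDF hq_int hq_cont _) (hq_pos _).ne'
  rw [div_eq_inv_mul]
  exact hQ'.comp z (hasDerivAt_densityCDF hp_int hp_cont z)

lemma div_mul_rpow_div_div_mul_rpow (x y a L b c : ℝ) (ha : a ≠ 0) (hL : 0 < L) :
    x / (a * L ^ (1 - b)) / (y / (a * L ^ (1 - c))) = x / y * L ^ (b - c) := by
  have hrpow : L ^ (b - c) = L ^ (1 - c) / L ^ (1 - b) := by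
    rw [← Real.rpow_sub hL]
    ring_nf
  have hLb := (Real.rpow_pos_of_pos hL (1 - b)).ne'
  rw [hrpow]
  rcases eq_or_ne y 0 with rfl | hy
  · simp
  · field_simp

theorem slope_asymptotics_shape_parameters_general
    (p q T Qp Qq : ℝ → ℝ) (βp βq cp cq : ℝ)
    (hp_cont : Continuous p) (hp_pos : ∀ z, 0 < p z)
    (hp_prob : ∫⁻ z, ENNReal.ofReal (p z) = 1)
    (hq_cont : Continuous q) (hq_pos : ∀ x, 0 < q x)
    (hq_prob : ∫⁻ x, ENNReal.ofReal (q x) = 1)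
    (hQp : ∀ u ∈ Set.Ioo (0:ℝ) 1, (∫ t in Set.Iic (Qp u), p t) = u)
    (hQq : ∀ u ∈ Set.Ioo (0:ℝ) 1, (∫ t in Set.Iic (Qq u), q t) = u)
    (hT : ∀ z, (∫ t in Set.Iic (T z), q t) = ∫ t in Set.Iic z, p t)
    (hcq : 0 < cq)
    (hp_lim : Tendsto
      (fun u => p (Qp u) / ((1 - u) * (Real.log (1 / (1 - u))) ^ (1 - βp)))
      (𝓝[<] (1:ℝ)) (𝓝 cp))
    (hq_lim : Tendsto
      (fun u => q (Qq u) / ((1 - u) * (Real.log (1 / (1 - u))) ^ (1 - βq)))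
      (𝓝[<] (1:ℝ)) (𝓝 cq)) :
    Tendsto
      (fun z => deriv T z *
        (Real.log (1 / (1 - ∫ t in Set.Iic z, p t))) ^ (βp - βq))
      atTop (𝓝 (cp / cq)) := by
  have hp_nn z := (hp_pos z).le
  have hq_nn x := (hq_pos x).le
  have hp_int := integrable_of_lintegral_ofReal_eq_one hp_cont hp_nn hp_prob
  have hq_int := integrable_of_lintegral_ofReal_eq_one hq_cont hq_nn hq_prob
  have hp_tot := integral_eq_one_of_lintegral_ofReal_eq_one hp_cont hp_nn hp_prob
  have hq_tot := integral_eq_one_of_lintegral_ofReal_eq_one hq_cont hq_nn hq_prob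
  have hFp_mem := densityCDF_mem_Ioo hp_int hp_pos hp_tot
  have hFp_lim : Tendsto (densityCDF p) atTop (𝓝[<] 1) :=
    tendsto_nhdsWithin_of_tendsto_nhds_of_eventually_within _
      (hp_tot ▸ tendsto_densityCDF_atTop hp_int) (.of_forall fun z => (hFp_mem z).2)
  obtain rfl := eq_quantile_comp_densityCDF hp_int hp_pos hp_tot hq_int hq_pos hQq hT
  refine ((hp_lim.div hq_lim hcq.ne').comp hFp_lim).congr fun z => ?_
  obtain ⟨hu0, hu1⟩ := hFp_mem z
  have hL : 0 < Real.log (1 / (1 - densityCDF p z)) :=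
    Real.log_pos <| (one_lt_div (sub_pos.2 hu1)).2 (by linarith)
  rw [Function.comp_apply, Pi.div_apply,
    div_mul_rpow_div_div_mul_rpow _ _ _ _ _ _ (sub_pos.2 hu1).ne' hL,
    quantile_apply_eq_self (densityCDF_strictMono hp_int hp_pos) hFp_mem hQp,
    (hasDerivAt_quantile_comp_densityCDF hp_int hp_cont hp_pos hp_tot hq_int hq_cont hq_pos
      hq_tot hQq z).deriv]
  rfl

/-- Let `p`, `q` be continuous everywhere-positive probability
densities on ℝ with CDFs `F_p`, `F_q`, density quantile functions
`fQ_p(u) = p(F_p⁻¹ u)`, `fQ_q(u) = q(F_q⁻¹ u)`, and `T = F_q⁻¹ ∘ F_p`. Suppose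
there are shape parameters `β_p, β_q ∈ [0,1]` and `c_p, c_q ∈ (0,∞)` with
`fQ_p(u) / [(1−u)(log(1/(1−u)))^{1−β_p}] → c_p` and
`fQ_q(u) / [(1−u)(log(1/(1−u)))^{1−β_q}] → c_q` as `u → 1⁻`. Then
`T'(z)·(log(1/(1−F_p(z))))^{β_p−β_q} → c_p/c_q` as `z → ∞`. -/
theorem slope_asymptotics_shape_parameters
    (p q T Qp Qq : ℝ → ℝ) (βp βq cp cq : ℝ)
    (hp_cont : Continuous p) (hp_pos : ∀ z, 0 < p z)
    (hp_prob : ∫⁻ z, ENNReal.ofReal (p z) = 1)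
    (hq_cont : Continuous q) (hq_pos : ∀ x, 0 < q x)
    (hq_prob : ∫⁻ x, ENNReal.ofReal (q x) = 1)
    (hQp : ∀ u ∈ Set.Ioo (0:ℝ) 1, (∫ t in Set.Iic (Qp u), p t) = u)
    (hQq : ∀ u ∈ Set.Ioo (0:ℝ) 1, (∫ t in Set.Iic (Qq u), q t) = u)
    (hT : ∀ z, (∫ t in Set.Iic (T z), q t) = ∫ t in Set.Iic z, p t)
    (hβp : 0 ≤ βp) (hβp1 : βp ≤ 1) (hβq : 0 ≤ βq) (hβq1 : βq ≤ 1)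
    (hcp : 0 < cp) (hcq : 0 < cq)
    (hp_lim : Tendsto
      (fun u => p (Qp u) / ((1 - u) * (Real.log (1 / (1 - u))) ^ (1 - βp)))
      (𝓝[<] (1:ℝ)) (𝓝 cp))
    (hq_lim : Tendsto
      (fun u => q (Qq u) / ((1 - u) * (Real.log (1 / (1 - u))) ^ (1 - βq)))
      (𝓝[<] (1:ℝ)) (𝓝 cq)) :
    Tendsto
      (fun z => deriv T z *
        (Real.log (1 / (1 - ∫ t in Set.Iic z, p t))) ^ (βp - βq))
      atTop (𝓝 (cp / cq)) :=
  slope_asymptotics_shape_parameters_general p q T Qp Qq βp βq cp cq hp_cont hp_pos hp_prob hq_cont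
    hq_pos hq_prob hQp hQq hT hcq hp_lim hq_lim
end

section
/- Let μ be a probability measure on ℝ with continuous strictly increasing CDF F and quantile function Q = F⁻¹. Suppose for some γ > 0 there is c ∈ (0, ∞) with lim_{u→1⁻} Q(u)·(1−u)^γ = c, and let ω > 0. Then there exists z₀ such that ∫_{(z₀,∞)} z^ω dμ(z) < ∞ if and only if ω < 1/γ. -/
open MeasureTheory ProbabilityTheory Filter Topology Set Real

/-!
Since `Q` inverts the CDF `F`, substituting `u = F z` in the hypothesis gives
`z · μ (z, ∞) ^ γ → c`, so the tail `μ (z, ∞)` is comparable to `z ^ (-1/γ)`. By the layer-cake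
formula, `∫_{(z₀,∞)} z ^ ω dμ` equals, up to a finite term, `∫_{z₀}^∞ ω t ^ (ω - 1) μ (t, ∞) dt`,
whose integrand is comparable to `t ^ (ω - 1 - 1/γ)`; this is integrable at infinity exactly
when `ω < 1/γ`.
-/

lemma cdf_mem_Ioo_of_strictMono {μ : Measure ℝ} (hF : StrictMono (cdf μ)) (x : ℝ) :
    cdf μ x ∈ Ioo (0 : ℝ) 1 :=
  ⟨(cdf_nonneg μ (x - 1)).trans_lt (hF (sub_one_lt x)),
    (hF (lt_add_one x)).trans_le (cdf_le_one μ _)⟩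

lemma tendsto_mul_measureReal_Ioi_rpow_of_quantile {μ : Measure ℝ} [IsProbabilityMeasure μ]
    {Q : ℝ → ℝ} {γ c : ℝ} (hF : StrictMono (cdf μ)) (hQ : ∀ u ∈ Ioo (0 : ℝ) 1, cdf μ (Q u) = u)
    (hlim : Tendsto (fun u => Q u * (1 - u) ^ γ) (𝓝[<] 1) (𝓝 c)) :
    Tendsto (fun z => z * μ.real (Ioi z) ^ γ) atTop (𝓝 c) := by
  have hQF : ∀ x, Q (cdf μ x) = x := fun x => hF.injective (hQ _ (cdf_mem_Ioo_of_strictMono hF x))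
  have hF1 : Tendsto (cdf μ) atTop (𝓝[<] 1) :=
    tendsto_nhdsWithin_of_tendsto_nhds_of_eventually_within _ (tendsto_cdf_atTop μ)
      (Eventually.of_forall fun x => (cdf_mem_Ioo_of_strictMono hF x).2)
  refine (hlim.comp hF1).congr fun z => ?_
  rw [Function.comp_apply, hQF, ← compl_Iic, probReal_compl_eq_one_sub measurableSet_Iic,
    cdf_eq_real]

lemma tendsto_mul_rpow_inv_of_tendsto_mul_rpow {f : ℝ → ℝ} {γ c : ℝ} (hγ : 0 < γ)
    (hf : ∀ z, 0 ≤ f z) (h : Tendsto (fun z => z * f z ^ γ) atTop (𝓝 c)) :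
    Tendsto (fun z => f z * z ^ γ⁻¹) atTop (𝓝 (c ^ γ⁻¹)) := by
  refine (h.rpow_const (Or.inr (inv_nonneg.2 hγ.le))).congr' ?_
  filter_upwards [eventually_ge_atTop 0] with z hz
  rw [mul_rpow hz (rpow_nonneg (hf z) _), rpow_rpow_inv (hf z) hγ.ne', mul_comm]

lemma eventually_le_and_le_of_tendsto_mul_rpow {f : ℝ → ℝ} {p L : ℝ} (hL : 0 < L)
    (h : Tendsto (fun z => f z * z ^ p) atTop (𝓝 L)) :
    ∀ᶠ z in atTop, L / 2 * z ^ (-p) ≤ f z ∧ f z ≤ 2 * L * z ^ (-p) := by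
  filter_upwards [h.eventually (Icc_mem_nhds (half_lt_self hL) (by linarith : L < 2 * L)),
    eventually_gt_atTop 0] with z ⟨hlow, hupp⟩ hz
  have hzp : 0 < z ^ p := rpow_pos_of_pos hz p
  rw [rpow_neg hz.le, ← div_eq_mul_inv, ← div_eq_mul_inv]
  exact ⟨(div_le_iff₀ hzp).2 hlow, (le_div_iff₀ hzp).2 hupp⟩

lemma integral_mul_rpow_sub_one {ω : ℝ} (hω : 0 < ω) (z : ℝ) :
    ∫ t in (0 : ℝ)..z, ω * t ^ (ω - 1) = z ^ ω := by
  rw [intervalIntegral.integral_const_mul, integral_rpow (Or.inl (by linarith)), sub_add_cancel,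
    zero_rpow hω.ne', sub_zero, mul_div_cancel₀ _ hω.ne']

lemma lintegral_Ioi_rpow_eq_lintegral_measure_Ioi (μ : Measure ℝ) {z₀ ω : ℝ} (hz₀ : 0 ≤ z₀)
    (hω : 0 < ω) :
    ∫⁻ z in Ioi z₀, ENNReal.ofReal (z ^ ω) ∂μ
      = ∫⁻ t in Ioi 0, μ (Ioi (max z₀ t)) * ENNReal.ofReal (ω * t ^ (ω - 1)) := by
  have hnonneg : 0 ≤ᵐ[μ.restrict (Ioi z₀)] id := by
    filter_upwards [ae_restrict_mem measurableSet_Ioi] with z hz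
    exact hz₀.trans hz.out.le
  have hint : ∀ t > 0, IntervalIntegrable (fun t => ω * t ^ (ω - 1)) volume 0 t :=
    fun t _ => (intervalIntegral.intervalIntegrable_rpow' (by linarith)).const_mul ω
  have hpos : ∀ᵐ t ∂volume.restrict (Ioi 0), 0 ≤ ω * t ^ (ω - 1) := by
    filter_upwards [ae_restrict_mem measurableSet_Ioi] with t ht
    exact mul_nonneg hω.le (rpow_nonneg ht.out.le _)
  calc ∫⁻ z in Ioi z₀, ENNReal.ofReal (z ^ ω) ∂μ
      = ∫⁻ z in Ioi z₀, ENNReal.ofReal (∫ t in (0 : ℝ)..id z, ω * t ^ (ω - 1)) ∂μ := by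
        simp only [id_eq, integral_mul_rpow_sub_one hω]
    _ = ∫⁻ t in Ioi 0, μ.restrict (Ioi z₀) {a | t < id a} * ENNReal.ofReal (ω * t ^ (ω - 1)) :=
        lintegral_comp_eq_lintegral_meas_lt_mul _ hnonneg aemeasurable_id hint hpos
    _ = _ := lintegral_congr fun t => by
        rw [Measure.restrict_apply' measurableSet_Ioi]
        change μ (Ioi t ∩ Ioi z₀) * _ = _
        rw [Ioi_inter_Ioi, max_comm]

lemma lintegral_Ioi_rpow_lt_top_iff (μ : Measure ℝ) [IsFiniteMeasure μ] {a ω : ℝ} (ha : 0 < a)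
    (hω : 0 < ω) :
    ∫⁻ z in Ioi a, ENNReal.ofReal (z ^ ω) ∂μ < ⊤ ↔
      ∫⁻ t in Ioi a, μ (Ioi t) * ENNReal.ofReal (ω * t ^ (ω - 1)) < ⊤ := by
  have hhead : ∫⁻ t in Ioc 0 a, μ (Ioi (max a t)) * ENNReal.ofReal (ω * t ^ (ω - 1)) < ⊤ := by
    have hint : IntegrableOn (fun t => ω * t ^ (ω - 1)) (Ioc 0 a) :=
      ((intervalIntegral.intervalIntegrable_rpow' (by linarith)).const_mul ω).1
    calc _ ≤ ∫⁻ t in Ioc 0 a, μ univ * ENNReal.ofReal (ω * t ^ (ω - 1)) :=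
          lintegral_mono fun t => mul_le_mul_left (measure_mono (subset_univ _)) _
      _ = μ univ * ∫⁻ t in Ioc 0 a, ENNReal.ofReal (ω * t ^ (ω - 1)) :=
          lintegral_const_mul' _ _ (measure_ne_top μ _)
      _ < ⊤ := ENNReal.mul_lt_top (measure_lt_top μ _) hint.lintegral_lt_top
  have htail : ∫⁻ t in Ioi a, μ (Ioi (max a t)) * ENNReal.ofReal (ω * t ^ (ω - 1))
      = ∫⁻ t in Ioi a, μ (Ioi t) * ENNReal.ofReal (ω * t ^ (ω - 1)) :=
    setLIntegral_congr_fun measurableSet_Ioi fun t ht => by rw [max_eq_right ht.out.le]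
  rw [lintegral_Ioi_rpow_eq_lintegral_measure_Ioi μ ha.le hω, ← Ioc_union_Ioi_eq_Ioi ha.le,
    lintegral_union measurableSet_Ioi Ioc_disjoint_Ioi_same, htail, ENNReal.add_lt_top]
  exact and_iff_right hhead

lemma lintegral_Ioi_ofReal_mul_rpow_lt_top_iff {a K s : ℝ} (ha : 0 < a) (hK : 0 < K) :
    ∫⁻ t in Ioi a, ENNReal.ofReal (K * t ^ s) < ⊤ ↔ s < -1 := by
  have hcont : ContinuousOn (fun t : ℝ => K * t ^ s) (Ioi a) := fun t ht =>
    (continuousAt_const.mul (continuousAt_rpow_const t s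
      (Or.inl (ha.trans ht.out).ne'))).continuousWithinAt
  have hnonneg : 0 ≤ᵐ[volume.restrict (Ioi a)] fun t => K * t ^ s := by
    filter_upwards [ae_restrict_mem measurableSet_Ioi] with t ht
    exact mul_nonneg hK.le (rpow_nonneg (ha.trans ht.out).le _)
  rw [lt_top_iff_ne_top, lintegral_ofReal_ne_top_iff_integrable
      (hcont.aestronglyMeasurable measurableSet_Ioi) hnonneg,
    integrable_const_mul_iff (isUnit_iff_ne_zero.2 hK.ne'), ← IntegrableOn,
    integrableOn_Ioi_rpow_iff ha]

lemma lintegral_Ioi_measure_Ioi_mul_rpow_lt_top_iff (μ : Measure ℝ) {a p ω C₁ C₂ : ℝ}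
    (ha : 0 < a) (hω : 0 < ω) (hC₁ : 0 < C₁) (hC₂ : 0 < C₂)
    (hbounds : ∀ t ≥ a, ENNReal.ofReal (C₁ * t ^ (-p)) ≤ μ (Ioi t) ∧
      μ (Ioi t) ≤ ENNReal.ofReal (C₂ * t ^ (-p))) :
    ∫⁻ t in Ioi a, μ (Ioi t) * ENNReal.ofReal (ω * t ^ (ω - 1)) < ⊤ ↔ ω < p := by
  have hprod : ∀ C, 0 ≤ C → ∀ t ∈ Ioi a,
      ENNReal.ofReal (C * t ^ (-p)) * ENNReal.ofReal (ω * t ^ (ω - 1))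
        = ENNReal.ofReal (C * ω * t ^ (ω - 1 - p)) := fun C hC t ht => by
    have ht0 : 0 < t := ha.trans ht
    rw [← ENNReal.ofReal_mul (mul_nonneg hC (rpow_nonneg ht0.le _)), sub_eq_add_neg (ω - 1),
      rpow_add ht0]
    ring_nf
  have hlower : ∫⁻ t in Ioi a, ENNReal.ofReal (C₁ * ω * t ^ (ω - 1 - p))
      ≤ ∫⁻ t in Ioi a, μ (Ioi t) * ENNReal.ofReal (ω * t ^ (ω - 1)) :=
    setLIntegral_mono' measurableSet_Ioi fun t ht => by
      rw [← hprod C₁ hC₁.le t ht]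
      exact mul_le_mul_left (hbounds t ht.out.le).1 _
  have hupper : ∫⁻ t in Ioi a, μ (Ioi t) * ENNReal.ofReal (ω * t ^ (ω - 1))
      ≤ ∫⁻ t in Ioi a, ENNReal.ofReal (C₂ * ω * t ^ (ω - 1 - p)) :=
    setLIntegral_mono' measurableSet_Ioi fun t ht => by
      rw [← hprod C₂ hC₂.le t ht]
      exact mul_le_mul_left (hbounds t ht.out.le).2 _
  rw [show ω < p ↔ ω - 1 - p < -1 by constructor <;> intro <;> linarith]
  exact ⟨fun h => (lintegral_Ioi_ofReal_mul_rpow_lt_top_iff ha (mul_pos hC₁ hω)).1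
      (hlower.trans_lt h),
    fun h => hupper.trans_lt ((lintegral_Ioi_ofReal_mul_rpow_lt_top_iff ha (mul_pos hC₂ hω)).2 h)⟩

theorem exists_lintegral_Ioi_rpow_lt_top_iff_of_tendsto (μ : Measure ℝ) [IsFiniteMeasure μ]
    {p L ω : ℝ} (hL : 0 < L) (hω : 0 < ω)
    (h : Tendsto (fun z => μ.real (Ioi z) * z ^ p) atTop (𝓝 L)) :
    (∃ z₀ : ℝ, ∫⁻ z in Ioi z₀, ENNReal.ofReal (z ^ ω) ∂μ < ⊤) ↔ ω < p := by
  obtain ⟨a, ha⟩ := eventually_atTop.1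
    ((eventually_le_and_le_of_tendsto_mul_rpow hL h).and (eventually_gt_atTop 0))
  have hbounds : ∀ t ≥ a, ENNReal.ofReal (L / 2 * t ^ (-p)) ≤ μ (Ioi t) ∧
      μ (Ioi t) ≤ ENNReal.ofReal (2 * L * t ^ (-p)) := fun t ht => by
    rw [← ofReal_measureReal]
    exact ⟨ENNReal.ofReal_le_ofReal (ha t ht).1.1, ENNReal.ofReal_le_ofReal (ha t ht).1.2⟩
  have hmoment : ∀ b ≥ a, ∫⁻ z in Ioi b, ENNReal.ofReal (z ^ ω) ∂μ < ⊤ ↔ ω < p := fun b hab => by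
    have hb : 0 < b := (ha a le_rfl).2.trans_le hab
    rw [lintegral_Ioi_rpow_lt_top_iff μ hb hω]
    exact lintegral_Ioi_measure_Ioi_mul_rpow_lt_top_iff μ hb hω (half_pos hL) (by positivity)
      fun t ht => hbounds t (hab.trans ht)
  exact ⟨fun ⟨z₀, hz₀⟩ => (hmoment _ (le_max_right z₀ a)).1
      ((lintegral_mono_set (Ioi_subset_Ioi (le_max_left z₀ a))).trans_lt hz₀),
    fun hωp => ⟨a, (hmoment a le_rfl).2 hωp⟩⟩

theorem tail_moment_iff_lt_inv_gamma_general
    (μ : Measure ℝ) [IsProbabilityMeasure μ] (Q : ℝ → ℝ) (γ c ω : ℝ)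
    (hF_mono : StrictMono fun x => (μ (Set.Iic x)).toReal)
    (hQ : ∀ u ∈ Set.Ioo (0:ℝ) 1, (μ (Set.Iic (Q u))).toReal = u)
    (hγ : 0 < γ) (hc : 0 < c) (hω : 0 < ω)
    (hlim : Tendsto (fun u => Q u * (1 - u) ^ γ) (𝓝[<] (1:ℝ)) (𝓝 c)) :
    (∃ z₀ : ℝ, ∫⁻ z in Set.Ioi z₀, ENNReal.ofReal (z ^ ω) ∂μ < ⊤) ↔ ω < 1 / γ := by
  have hF : StrictMono (cdf μ) := funext (cdf_eq_real μ) ▸ hF_mono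
  have hQF : ∀ u ∈ Ioo (0 : ℝ) 1, cdf μ (Q u) = u := fun u hu => (cdf_eq_real μ _).trans (hQ u hu)
  have htail := tendsto_mul_rpow_inv_of_tendsto_mul_rpow hγ (fun _ => measureReal_nonneg)
    (tendsto_mul_measureReal_Ioi_rpow_of_quantile hF hQF hlim)
  rw [one_div]
  exact exists_lintegral_Ioi_rpow_lt_top_iff_of_tendsto μ (rpow_pos_of_pos hc _) hω htail

/-- Let `μ` be a probability measure on ℝ with continuous strictly
increasing CDF `F` and quantile function `Q = F⁻¹`. If for some `γ > 0` one has
`Q(u)·(1−u)^γ → c ∈ (0,∞)` as `u → 1⁻`, then for any `ω > 0` there exists `z₀` with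
`∫_{(z₀,∞)} z^ω dμ(z) < ∞` iff `ω < 1/γ`. -/
theorem tail_moment_iff_lt_inv_gamma
    (μ : Measure ℝ) [IsProbabilityMeasure μ] (Q : ℝ → ℝ) (γ c ω : ℝ)
    (hF_cont : Continuous fun x => (μ (Set.Iic x)).toReal)
    (hF_mono : StrictMono fun x => (μ (Set.Iic x)).toReal)
    (hQ : ∀ u ∈ Set.Ioo (0:ℝ) 1, (μ (Set.Iic (Q u))).toReal = u)
    (hγ : 0 < γ) (hc : 0 < c) (hω : 0 < ω)
    (hlim : Tendsto (fun u => Q u * (1 - u) ^ γ) (𝓝[<] (1:ℝ)) (𝓝 c)) :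
    (∃ z₀ : ℝ, ∫⁻ z in Set.Ioi z₀, ENNReal.ofReal (z ^ ω) ∂μ < ⊤) ↔ ω < 1 / γ :=
  tail_moment_iff_lt_inv_gamma_general μ Q γ c ω hF_mono hQ hγ hc hω hlim
end

section
/- Let p be a probability density on ℝ^d with ∫_{ℝ^d} e^{λ₀‖z‖} p(z) dz < ∞ for some λ₀ > 0 (p is light-tailed), and let q be a probability density on ℝ^d with ∫_{ℝ^d} e^{λ‖x‖} q(x) dx = ∞ for every λ > 0 (q is heavy-tailed), where ‖·‖ denotes the Euclidean norm. If T : ℝ^d → ℝ^d is a measurable map with q = T#p, then T is not Lipschitz continuous. -/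
open MeasureTheory Filter Topology Set

/-- Let `p` be a light-tailed probability density on ℝ^d
(`∫ e^{λ₀‖z‖} p(z) dz < ∞` for some `λ₀ > 0`) and `q` a heavy-tailed probability
density on ℝ^d (`∫ e^{λ‖x‖} q(x) dx = ∞` for every `λ > 0`). If `T : ℝ^d → ℝ^d`
is measurable with `q = T#p`, then `T` is not Lipschitz continuous. -/
theorem heavy_tailed_pushforward_not_lipschitz
    {d : ℕ} (p q : EuclideanSpace ℝ (Fin d) → ℝ)
    (T : EuclideanSpace ℝ (Fin d) → EuclideanSpace ℝ (Fin d))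
    (hp_meas : Measurable p) (hp_nonneg : ∀ z, 0 ≤ p z)
    (hp_prob : ∫⁻ z, ENNReal.ofReal (p z) = 1)
    (hq_meas : Measurable q) (hq_nonneg : ∀ x, 0 ≤ q x)
    (hq_prob : ∫⁻ x, ENNReal.ofReal (q x) = 1)
    (hp_light : ∃ l > (0:ℝ), ∫⁻ z, ENNReal.ofReal (Real.exp (l * ‖z‖) * p z) < ⊤)
    (hq_heavy : ∀ l > (0:ℝ), ∫⁻ x, ENNReal.ofReal (Real.exp (l * ‖x‖) * q x) = ⊤)
    (hT_meas : Measurable T)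
    (hpush : Measure.map T (volume.withDensity fun z => ENNReal.ofReal (p z))
      = volume.withDensity fun x => ENNReal.ofReal (q x)) :
    ¬ ∃ K : NNReal, LipschitzWith K T := by
  rintro ⟨K, hK⟩
  obtain ⟨l, hl0, hl⟩ := hp_light
  have hK1 : (0:ℝ) < (K:ℝ) + 1 := by positivity
  set lam : ℝ := l / ((K:ℝ) + 1) with hlamdef
  have hlam0 : 0 < lam := div_pos hl0 hK1
  have hlamK : lam * ((K:ℝ) + 1) = l := div_mul_cancel₀ l (ne_of_gt hK1)
  -- pointwise bound lam * ‖T z‖ ≤ l * ‖z‖ + lam * ‖T 0‖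
  have key : ∀ z, lam * ‖T z‖ ≤ l * ‖z‖ + lam * ‖T 0‖ := by
    intro z
    have h1 := norm_sub_norm_le (T z) (T 0)
    have h2 : ‖T z - T 0‖ ≤ (K:ℝ) * ‖z‖ := by
      have := hK.dist_le_mul z 0
      simpa [dist_eq_norm] using this
    have h3 : lam * (K:ℝ) ≤ l := by
      nlinarith [hlam0.le]
    nlinarith [norm_nonneg z, norm_nonneg (T 0), norm_nonneg (T z - T 0), hlam0.le]
  -- measurability helpers
  have hexp : Measurable fun x : EuclideanSpace ℝ (Fin d) =>
      ENNReal.ofReal (Real.exp (lam * ‖x‖)) := by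
    exact ((measurable_norm.const_mul lam).exp).ennreal_ofReal
  have hp' : Measurable fun z => ENNReal.ofReal (p z) := hp_meas.ennreal_ofReal
  have hq' : Measurable fun x => ENNReal.ofReal (q x) := hq_meas.ennreal_ofReal
  -- compute the heavy integral via pushforward
  have htop := hq_heavy lam hlam0
  have e1 : (∫⁻ x, ENNReal.ofReal (Real.exp (lam * ‖x‖) * q x))
      = ∫⁻ x, ENNReal.ofReal (q x) * ENNReal.ofReal (Real.exp (lam * ‖x‖)) := by
    congr 1; funext x
    rw [ENNReal.ofReal_mul (Real.exp_nonneg _), mul_comm]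
  have e2 : (∫⁻ x, ENNReal.ofReal (q x) * ENNReal.ofReal (Real.exp (lam * ‖x‖)))
      = ∫⁻ x, ENNReal.ofReal (Real.exp (lam * ‖x‖))
          ∂(volume.withDensity fun x => ENNReal.ofReal (q x)) := by
    rw [lintegral_withDensity_eq_lintegral_mul volume hq' hexp]; rfl
  have e3 : (∫⁻ x, ENNReal.ofReal (Real.exp (lam * ‖x‖))
          ∂(volume.withDensity fun x => ENNReal.ofReal (q x)))
      = ∫⁻ z, ENNReal.ofReal (Real.exp (lam * ‖T z‖))
          ∂(volume.withDensity fun z => ENNReal.ofReal (p z)) := by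
    rw [← hpush, lintegral_map hexp hT_meas]
  have e4 : (∫⁻ z, ENNReal.ofReal (Real.exp (lam * ‖T z‖))
          ∂(volume.withDensity fun z => ENNReal.ofReal (p z)))
      = ∫⁻ z, ENNReal.ofReal (p z) * ENNReal.ofReal (Real.exp (lam * ‖T z‖)) := by
    rw [lintegral_withDensity_eq_lintegral_mul volume hp'
      (((hT_meas.norm.const_mul lam)).exp.ennreal_ofReal)]; rfl
  -- bound the last integral
  have bound : (∫⁻ z, ENNReal.ofReal (p z) * ENNReal.ofReal (Real.exp (lam * ‖T z‖)))
      ≤ ENNReal.ofReal (Real.exp (lam * ‖T 0‖)) *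
        ∫⁻ z, ENNReal.ofReal (Real.exp (l * ‖z‖) * p z) := by
    rw [← lintegral_const_mul _ (by
      exact ((measurable_norm.const_mul l).exp.mul hp_meas).ennreal_ofReal)]
    refine lintegral_mono fun z => ?_
    rw [ENNReal.ofReal_mul (Real.exp_nonneg _)]
    calc ENNReal.ofReal (p z) * ENNReal.ofReal (Real.exp (lam * ‖T z‖))
        ≤ ENNReal.ofReal (p z) *
          ENNReal.ofReal (Real.exp (l * ‖z‖ + lam * ‖T 0‖)) := by
          gcongr
          exact key z
      _ = ENNReal.ofReal (Real.exp (lam * ‖T 0‖)) *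
          (ENNReal.ofReal (Real.exp (l * ‖z‖)) * ENNReal.ofReal (p z)) := by
          rw [Real.exp_add, ENNReal.ofReal_mul (Real.exp_nonneg _)]
          ring
  have hfin : (∫⁻ x, ENNReal.ofReal (Real.exp (lam * ‖x‖) * q x)) < ⊤ := by
    rw [e1, e2, e3, e4]
    exact lt_of_le_of_lt bound (ENNReal.mul_lt_top ENNReal.ofReal_lt_top hl)
  exact absurd htop hfin.ne
end

section
/- Let p be a probability density on ℝ^d such that ∫_{ℝ^d} e^{⟨w,z⟩} p(z) dz < ∞ for every w ∈ ℝ^d, and let q be a probability density on ℝ^d for which there exists a unit vector u ∈ ℝ^d with ∫_{ℝ^d} e^{κ⟨u,x⟩} q(x) dx = ∞ for every κ > 0. If T : ℝ^d → ℝ^d is a differentiable map with q = T#p, then there exists an index i ∈ {1,…,d} such that the gradient of the i-th component T_i of T is unbounded: sup_{z ∈ ℝ^d} ‖∇T_i(z)‖ = ∞. -/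
/-!
If every component of `T` had bounded gradient, `T` would be Lipschitz, so `⟪u, T z⟫`
would grow at most linearly in `‖z‖`. Since
`e^{L‖z‖} ≤ e^{L ∑ |zᵢ|} ≤ ∏ᵢ (e^{L zᵢ} + e^{-L zᵢ})` and expanding the product gives a
finite sum of exponentials `e^{⟨w, z⟩}`, the finite exponential moments of `p` make
`∫ e^{⟨u, T z⟩} p(z) dz` finite. By `q = T#p` that integral is `∫ e^{⟨u, x⟩} q(x) dx`,
which is infinite.
-/

open MeasureTheory Finset

namespace EuclideanSpace

variable {ι : Type*} [Fintype ι]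

lemma norm_le_sum_abs (y : EuclideanSpace ℝ ι) : ‖y‖ ≤ ∑ i, |y i| := by
  rw [EuclideanSpace.norm_eq]
  calc √(∑ i, ‖y i‖ ^ 2) ≤ √((∑ i, |y i|) ^ 2) :=
        Real.sqrt_le_sqrt (sum_sq_le_sq_sum_of_nonneg fun i _ => abs_nonneg (y i))
    _ = ∑ i, |y i| := Real.sqrt_sq (sum_nonneg fun i _ => abs_nonneg _)

lemma opNorm_le_sum_opNorm_proj_comp {F : Type*} [NormedAddCommGroup F] [NormedSpace ℝ F]
    (f : F →L[ℝ] EuclideanSpace ℝ ι) : ‖f‖ ≤ ∑ i, ‖(proj i).comp f‖ :=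
  f.opNorm_le_bound (sum_nonneg fun _ _ => norm_nonneg _) fun v =>
    calc ‖f v‖ ≤ ∑ i, |f v i| := norm_le_sum_abs _
      _ ≤ ∑ i, ‖(proj i).comp f‖ * ‖v‖ :=
          sum_le_sum fun i _ => ((proj i).comp f).le_opNorm v
      _ = (∑ i, ‖(proj i).comp f‖) * ‖v‖ := (sum_mul ..).symm

lemma exists_exp_mul_norm_le_sum_exp_inner {L : ℝ} (hL : 0 ≤ L) :
    ∃ w : Finset ι → EuclideanSpace ℝ ι, ∀ z : EuclideanSpace ℝ ι,
      Real.exp (L * ‖z‖) ≤ ∑ t, Real.exp (inner ℝ (w t) z) := by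
  classical
  refine ⟨fun t => WithLp.toLp 2 fun i => if i ∈ t then L else -L, fun z => ?_⟩
  calc Real.exp (L * ‖z‖) ≤ ∏ i, Real.exp |L * z i| := by
        simp_rw [← Real.exp_sum, Real.exp_le_exp, abs_mul, abs_of_nonneg hL, ← mul_sum]
        exact mul_le_mul_of_nonneg_left (norm_le_sum_abs z) hL
    _ ≤ ∏ i, (Real.exp (L * z i) + Real.exp (-L * z i)) :=
        prod_le_prod (fun _ _ => (Real.exp_pos _).le) fun i _ => by
          simpa only [neg_mul] using Real.exp_abs_le (L * z i)
    _ = ∑ t, (∏ i ∈ t, Real.exp (L * z i)) * ∏ i ∈ tᶜ, Real.exp (-L * z i) := by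
        rw [prod_add, powerset_univ]
        simp_rw [compl_eq_univ_sdiff]
    _ = ∑ t : Finset ι,
          Real.exp (inner ℝ (WithLp.toLp 2 fun i => if i ∈ t then L else -L) z) := by
        refine sum_congr rfl fun t _ => ?_
        simp only [PiLp.inner_apply, RCLike.inner_apply, conj_trivial, Real.exp_sum]
        rw [← prod_mul_prod_compl t]
        congr 1 <;> refine prod_congr rfl fun i hi => ?_ <;> simp_all [mul_comm]

end EuclideanSpace

lemma lintegral_ofReal_withDensity_ofReal {α : Type*} [MeasurableSpace α] {μ : Measure α}
    {p : α → ℝ} (hp : Measurable p) {g : α → ℝ} (hg : ∀ x, 0 ≤ g x) :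
    ∫⁻ x, ENNReal.ofReal (g x) ∂μ.withDensity (fun x => ENNReal.ofReal (p x)) =
      ∫⁻ x, ENNReal.ofReal (g x * p x) ∂μ := by
  rw [lintegral_withDensity_eq_lintegral_mul_non_measurable _ hp.ennreal_ofReal
    (ae_of_all _ fun _ => ENNReal.ofReal_lt_top)]
  refine lintegral_congr fun x => ?_
  rw [Pi.mul_apply, ENNReal.ofReal_mul (hg x), mul_comm]

lemma lintegral_exp_lt_top_of_le_add_mul_norm {ι : Type*} [Fintype ι]
    {μ : Measure (EuclideanSpace ℝ ι)}
    (hμ : ∀ w, ∫⁻ z, ENNReal.ofReal (Real.exp (inner ℝ w z)) ∂μ < ⊤)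
    {f : EuclideanSpace ℝ ι → ℝ} {a b : ℝ} (hb : 0 ≤ b) (hf : ∀ z, f z ≤ a + b * ‖z‖) :
    ∫⁻ z, ENNReal.ofReal (Real.exp (f z)) ∂μ < ⊤ := by
  obtain ⟨w, hw⟩ := EuclideanSpace.exists_exp_mul_norm_le_sum_exp_inner (ι := ι) hb
  have h_pointwise (z : EuclideanSpace ℝ ι) : ENNReal.ofReal (Real.exp (f z)) ≤
      ENNReal.ofReal (Real.exp a) * ∑ t, ENNReal.ofReal (Real.exp (inner ℝ (w t) z)) := by
    rw [← ENNReal.ofReal_sum_of_nonneg fun _ _ => (Real.exp_pos _).le,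
      ← ENNReal.ofReal_mul (Real.exp_pos _).le]
    refine ENNReal.ofReal_le_ofReal ?_
    calc Real.exp (f z) ≤ Real.exp a * Real.exp (b * ‖z‖) := by
          rw [← Real.exp_add, Real.exp_le_exp]; exact hf z
      _ ≤ Real.exp a * ∑ t, Real.exp (inner ℝ (w t) z) :=
          mul_le_mul_of_nonneg_left (hw z) (Real.exp_pos a).le
  calc ∫⁻ z, ENNReal.ofReal (Real.exp (f z)) ∂μ
      ≤ ∫⁻ z, ENNReal.ofReal (Real.exp a) *
          ∑ t, ENNReal.ofReal (Real.exp (inner ℝ (w t) z)) ∂μ := lintegral_mono h_pointwise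
    _ = ENNReal.ofReal (Real.exp a) *
          ∑ t, ∫⁻ z, ENNReal.ofReal (Real.exp (inner ℝ (w t) z)) ∂μ := by
        rw [lintegral_const_mul' _ _ ENNReal.ofReal_ne_top, lintegral_finsetSum]
        exact fun t _ => by fun_prop
    _ < ⊤ :=
        ENNReal.mul_lt_top ENNReal.ofReal_lt_top (ENNReal.sum_lt_top.2 fun t _ => hμ (w t))

lemma norm_fderiv_le_sum_of_norm_fderiv_apply_le {ι F : Type*} [Fintype ι]
    [NormedAddCommGroup F] [NormedSpace ℝ F] {T : F → EuclideanSpace ℝ ι} {z : F}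
    (hT : DifferentiableAt ℝ T z) {C : ι → ℝ}
    (hC : ∀ i, ‖fderiv ℝ (fun w => T w i) z‖ ≤ C i) :
    ‖fderiv ℝ T z‖ ≤ ∑ i, C i := by
  refine (EuclideanSpace.opNorm_le_sum_opNorm_proj_comp _).trans (sum_le_sum fun i _ => ?_)
  rw [← ((EuclideanSpace.proj i).hasFDerivAt.comp z hT.hasFDerivAt).fderiv]
  exact hC i

lemma norm_le_norm_zero_add_mul_norm_of_norm_fderiv_le {E F : Type*} [NormedAddCommGroup E]
    [NormedSpace ℝ E] [NormedAddCommGroup F] [NormedSpace ℝ F] {f : E → F} {L : ℝ}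
    (hf : Differentiable ℝ f) (bound : ∀ x, ‖fderiv ℝ f x‖ ≤ L) (x : E) :
    ‖f x‖ ≤ ‖f 0‖ + L * ‖x‖ := by
  have h_sub := convex_univ.norm_image_sub_le_of_norm_fderiv_le (fun y _ => hf y)
    (fun y _ => bound y) (Set.mem_univ 0) (Set.mem_univ x)
  rw [sub_zero] at h_sub
  exact (norm_le_norm_add_norm_sub' (f x) (f 0)).trans (by gcongr)

theorem heavy_tailed_pushforward_component_gradient_unbounded_general
    {d : ℕ} (p q : EuclideanSpace ℝ (Fin d) → ℝ)
    (T : EuclideanSpace ℝ (Fin d) → EuclideanSpace ℝ (Fin d))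
    (u : EuclideanSpace ℝ (Fin d))
    (hp_meas : Measurable p)
    (hq_meas : Measurable q)
    (hp_exp : ∀ w : EuclideanSpace ℝ (Fin d),
      ∫⁻ z, ENNReal.ofReal (Real.exp (inner ℝ w z : ℝ) * p z) < ⊤)
    (hq_heavy : ∀ κ > (0:ℝ),
      ∫⁻ x, ENNReal.ofReal (Real.exp (κ * (inner ℝ u x : ℝ)) * q x) = ⊤)
    (hT_diff : Differentiable ℝ T)
    (hpush : Measure.map T (volume.withDensity fun z => ENNReal.ofReal (p z))
      = volume.withDensity fun x => ENNReal.ofReal (q x)) :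
    ∃ i : Fin d, ∀ C : ℝ, ∃ z : EuclideanSpace ℝ (Fin d),
      C < ‖fderiv ℝ (fun w => T w i) z‖ := by
  by_contra! h_bounded
  choose C hC using h_bounded
  set μ := volume.withDensity fun z => ENNReal.ofReal (p z)
  have hμ_exp (w : EuclideanSpace ℝ (Fin d)) :
      ∫⁻ z, ENNReal.ofReal (Real.exp (inner ℝ w z)) ∂μ < ⊤ := by
    rw [lintegral_ofReal_withDensity_ofReal hp_meas fun _ => (Real.exp_pos _).le]
    exact hp_exp w
  set L := ∑ i, C i
  have hT_grad (z : EuclideanSpace ℝ (Fin d)) : ‖fderiv ℝ T z‖ ≤ L :=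
    norm_fderiv_le_sum_of_norm_fderiv_apply_le (hT_diff z) fun i => hC i z
  have hL : 0 ≤ L := (norm_nonneg _).trans (hT_grad 0)
  have h_growth (z : EuclideanSpace ℝ (Fin d)) :
      inner ℝ u (T z) ≤ ‖u‖ * ‖T 0‖ + ‖u‖ * L * ‖z‖ := calc
    inner ℝ u (T z) ≤ ‖u‖ * ‖T z‖ := real_inner_le_norm _ _
    _ ≤ ‖u‖ * (‖T 0‖ + L * ‖z‖) := mul_le_mul_of_nonneg_left
        (norm_le_norm_zero_add_mul_norm_of_norm_fderiv_le hT_diff hT_grad z) (norm_nonneg u)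
    _ = _ := by ring
  have h_top : ∫⁻ z, ENNReal.ofReal (Real.exp (inner ℝ u (T z))) ∂μ = ⊤ := by
    rw [← lintegral_map (f := fun x => ENNReal.ofReal (Real.exp (inner ℝ u x))) (by fun_prop)
      hT_diff.continuous.measurable, hpush,
      lintegral_ofReal_withDensity_ofReal hq_meas fun _ => (Real.exp_pos _).le]
    simpa only [one_mul] using hq_heavy 1 one_pos
  exact h_top.not_lt (lintegral_exp_lt_top_of_le_add_mul_norm hμ_exp
    (mul_nonneg (norm_nonneg u) hL) h_growth)

/-- Let `p` be a probability density on ℝ^d with all directional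
exponential moments finite (`∫ e^{⟨w,z⟩} p(z) dz < ∞` for every `w`), and `q` a
probability density that is heavy-tailed in some unit direction `u`
(`∫ e^{κ⟨u,x⟩} q(x) dx = ∞` for every `κ > 0`). If `T : ℝ^d → ℝ^d` is differentiable
with `q = T#p`, then some component `T_i` has unbounded gradient. -/
theorem heavy_tailed_pushforward_component_gradient_unbounded
    {d : ℕ} (p q : EuclideanSpace ℝ (Fin d) → ℝ)
    (T : EuclideanSpace ℝ (Fin d) → EuclideanSpace ℝ (Fin d))
    (u : EuclideanSpace ℝ (Fin d))
    (hp_meas : Measurable p) (hp_nonneg : ∀ z, 0 ≤ p z)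
    (hp_prob : ∫⁻ z, ENNReal.ofReal (p z) = 1)
    (hq_meas : Measurable q) (hq_nonneg : ∀ x, 0 ≤ q x)
    (hq_prob : ∫⁻ x, ENNReal.ofReal (q x) = 1)
    (hp_exp : ∀ w : EuclideanSpace ℝ (Fin d),
      ∫⁻ z, ENNReal.ofReal (Real.exp (inner ℝ w z : ℝ) * p z) < ⊤)
    (hu : ‖u‖ = 1)
    (hq_heavy : ∀ κ > (0:ℝ),
      ∫⁻ x, ENNReal.ofReal (Real.exp (κ * (inner ℝ u x : ℝ)) * q x) = ⊤)
    (hT_diff : Differentiable ℝ T)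
    (hpush : Measure.map T (volume.withDensity fun z => ENNReal.ofReal (p z))
      = volume.withDensity fun x => ENNReal.ofReal (q x)) :
    ∃ i : Fin d, ∀ C : ℝ, ∃ z : EuclideanSpace ℝ (Fin d),
      C < ‖fderiv ℝ (fun w => T w i) z‖ :=
  heavy_tailed_pushforward_component_gradient_unbounded_general p q T u hp_meas hq_meas hp_exp
    hq_heavy hT_diff hpush
end

section
/- Let p be a probability density on ℝ^d with ∫_{ℝ^d} e^{λ‖z‖} p(z) dz < ∞ for every λ > 0, where ‖·‖ denotes the Euclidean norm. Let T : ℝ^d → ℝ^d be the triangular map with components T_j(z₁,…,z_d) = σ_j(z₁,…,z_{j−1})·z_j + μ_j(z₁,…,z_{j−1}) for j = 1,…,d, where each σ_j : ℝ^{j−1} → ℝ is bounded and each μ_j : ℝ^{j−1} → ℝ is Lipschitz continuous. Then ∫_{ℝ^d} e^{λ‖T(z)‖} p(z) dz < ∞ for every λ > 0; in particular the pushforward density q = T#p is light-tailed. -/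
open MeasureTheory Filter Topology Set

lemma coord_abs_le_norm {d : ℕ} (z : EuclideanSpace ℝ (Fin d)) (j : Fin d) :
    |z j| ≤ ‖z‖ := by
  rw [EuclideanSpace.norm_eq]
  have h1 : |z j| = Real.sqrt (‖z j‖ ^ 2) := by
    rw [Real.sqrt_sq_eq_abs]; simp [abs_abs, Real.norm_eq_abs]
  rw [h1]
  apply Real.sqrt_le_sqrt
  exact Finset.single_le_sum (f := fun i => ‖z i‖ ^ 2) (fun i _ => by positivity)
    (Finset.mem_univ j)

lemma norm_le_of_coords {d : ℕ} (z : EuclideanSpace ℝ (Fin d)) (M : ℝ) (hM : 0 ≤ M)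
    (h : ∀ j, |z j| ≤ M) : ‖z‖ ≤ Real.sqrt d * M := by
  rw [EuclideanSpace.norm_eq]
  have : (∑ i, ‖z i‖ ^ 2) ≤ ∑ _i : Fin d, M ^ 2 := by
    apply Finset.sum_le_sum
    intro i _
    have := h i
    rw [Real.norm_eq_abs]
    nlinarith [abs_nonneg (z i)]
  calc Real.sqrt (∑ i, ‖z i‖ ^ 2) ≤ Real.sqrt (∑ _i : Fin d, M ^ 2) := Real.sqrt_le_sqrt this
    _ = Real.sqrt (d * M ^ 2) := by simp [Finset.sum_const, mul_comm]
    _ = Real.sqrt d * M := by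
        rw [Real.sqrt_mul (by positivity), Real.sqrt_sq hM]

/-- Let `p` be a probability density on ℝ^d with
`∫ e^{λ‖z‖} p(z) dz < ∞` for every `λ > 0`, and let `T` be the affine triangular
map with components `T_j(z) = σ_j(z_{<j})·z_j + μ_j(z_{<j})`, where each `σ_j` is
bounded and each `μ_j` is Lipschitz (and both depend only on the first `j−1`
coordinates). Then `∫ e^{λ‖T(z)‖} p(z) dz < ∞` for every `λ > 0`; in particular
the pushforward density `q = T#p` is light-tailed. -/
theorem affine_triangular_flow_light_tailed
    {d : ℕ} (p : EuclideanSpace ℝ (Fin d) → ℝ)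
    (σ μf : Fin d → EuclideanSpace ℝ (Fin d) → ℝ)
    (T : EuclideanSpace ℝ (Fin d) → EuclideanSpace ℝ (Fin d))
    (hp_meas : Measurable p) (hp_nonneg : ∀ z, 0 ≤ p z)
    (hp_prob : ∫⁻ z, ENNReal.ofReal (p z) = 1)
    (hp_light : ∀ l > (0:ℝ), ∫⁻ z, ENNReal.ofReal (Real.exp (l * ‖z‖) * p z) < ⊤)
    (hσ_tri : ∀ (j : Fin d) (z w : EuclideanSpace ℝ (Fin d)),
      (∀ i : Fin d, i < j → z i = w i) → σ j z = σ j w)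
    (hμ_tri : ∀ (j : Fin d) (z w : EuclideanSpace ℝ (Fin d)),
      (∀ i : Fin d, i < j → z i = w i) → μf j z = μf j w)
    (hσ_bdd : ∀ j : Fin d, ∃ B : ℝ, ∀ z, |σ j z| ≤ B)
    (hμ_lip : ∀ j : Fin d, ∃ K : NNReal, LipschitzWith K (μf j))
    (hT : ∀ (z : EuclideanSpace ℝ (Fin d)) (j : Fin d),
      T z j = σ j z * z j + μf j z) :
    ∀ l > (0:ℝ), ∫⁻ z, ENNReal.ofReal (Real.exp (l * ‖T z‖) * p z) < ⊤ := by
  intro l hl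
  choose B hB using hσ_bdd
  choose K hK using hμ_lip
  set C : ℝ := ∑ j : Fin d, (max (B j) 0 + (K j : ℝ) + |μf j 0|) with hCdef
  have hC0 : 0 ≤ C := Finset.sum_nonneg fun j _ => by positivity
  -- coordinatewise bound
  have hcoord : ∀ (z : EuclideanSpace ℝ (Fin d)) (j : Fin d),
      |T z j| ≤ C * (1 + ‖z‖) := by
    intro z j
    have hzj := coord_abs_le_norm z j
    have hμz : |μf j z| ≤ |μf j 0| + (K j : ℝ) * ‖z‖ := by
      have h1 := (hK j).dist_le_mul z 0
      rw [Real.dist_eq, dist_zero_right] at h1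
      have := abs_sub_abs_le_abs_sub (μf j z) (μf j 0)
      linarith
    have hCj : max (B j) 0 + (K j : ℝ) + |μf j 0| ≤ C := by
      rw [hCdef]
      exact Finset.single_le_sum
        (f := fun j => max (B j) 0 + (K j : ℝ) + |μf j 0|)
        (fun i _ => by positivity) (Finset.mem_univ j)
    have hσz : |σ j z| ≤ max (B j) 0 := le_trans (hB j z) (le_max_left _ _)
    have hz0 : (0:ℝ) ≤ ‖z‖ := norm_nonneg z
    calc |T z j| = |σ j z * z j + μf j z| := by rw [hT]
      _ ≤ |σ j z * z j| + |μf j z| := abs_add_le _ _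
      _ = |σ j z| * |z j| + |μf j z| := by rw [abs_mul]
      _ ≤ max (B j) 0 * ‖z‖ + (|μf j 0| + (K j : ℝ) * ‖z‖) := by
          have := abs_nonneg (z j)
          have := le_max_right (B j) (0:ℝ)
          nlinarith
      _ ≤ (max (B j) 0 + (K j : ℝ) + |μf j 0|) * (1 + ‖z‖) := by nlinarith [abs_nonneg (μf j 0), (K j).coe_nonneg, le_max_right (B j) (0:ℝ)]
      _ ≤ C * (1 + ‖z‖) := by nlinarith
  have hnormT : ∀ z : EuclideanSpace ℝ (Fin d),
      ‖T z‖ ≤ Real.sqrt d * C * (1 + ‖z‖) := by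
    intro z
    have := norm_le_of_coords (T z) (C * (1 + ‖z‖))
      (by positivity) (hcoord z)
    linarith [this, mul_assoc (Real.sqrt d) C (1 + ‖z‖)]
  set c : ℝ := l * (Real.sqrt d * C) with hcdef
  have hc0 : 0 ≤ c := by positivity
  set l' : ℝ := c + l with hl'def
  have hl' : 0 < l' := by positivity
  have hpt : ∀ z, Real.exp (l * ‖T z‖) * p z
      ≤ Real.exp c * (Real.exp (l' * ‖z‖) * p z) := by
    intro z
    have h1 : l * ‖T z‖ ≤ c + l' * ‖z‖ := by
      have h2 := hnormT z
      have h3 : l * ‖T z‖ ≤ l * (Real.sqrt d * C * (1 + ‖z‖)) :=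
        mul_le_mul_of_nonneg_left h2 hl.le
      have hz0 : (0:ℝ) ≤ ‖z‖ := norm_nonneg z
      nlinarith [Real.sqrt_nonneg (d:ℝ)]
    have h4 : Real.exp (l * ‖T z‖) ≤ Real.exp c * Real.exp (l' * ‖z‖) := by
      rw [← Real.exp_add]; exact Real.exp_le_exp.mpr h1
    have := hp_nonneg z
    nlinarith [Real.exp_pos (l * ‖T z‖)]
  calc ∫⁻ z, ENNReal.ofReal (Real.exp (l * ‖T z‖) * p z)
      ≤ ∫⁻ z, ENNReal.ofReal (Real.exp c) * ENNReal.ofReal (Real.exp (l' * ‖z‖) * p z) := by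
        apply lintegral_mono
        intro z
        dsimp only
        rw [← ENNReal.ofReal_mul (Real.exp_pos c).le]
        exact ENNReal.ofReal_le_ofReal (hpt z)
    _ = ENNReal.ofReal (Real.exp c) * ∫⁻ z, ENNReal.ofReal (Real.exp (l' * ‖z‖) * p z) :=
        lintegral_const_mul' _ _ ENNReal.ofReal_ne_top
    _ < ⊤ := ENNReal.mul_lt_top ENNReal.ofReal_lt_top (hp_light l' hl')
end
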